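/- arXiv:1702.03917 — 8 statements merged into one kernel-verified Lean document; each statement's English description precedes it below -/
import Mathlib

section
/- Under the hypotheses of the MEXIT rate bound (ratio of one-step conditional probabilities bounded below by 1−δ for all paths), the probability of no MEXIT by time n is at least (1−δ)ⁿ, i.e., Σ_s min(p(s), q(s)) ≥ (1−δ)ⁿ where the sum is over genealogies s of length n; consequently the expected MEXIT time is at least 1/δ. -/
open scoped ENNReal

private lemma mexit_concat_le {S : Type*} [Countable S] (p : List S → ℝ≥0∞)
    (hp : ∀ l : List S, ∑' a : S, p (l ++ [a]) = p l) (l : List S) (a : S) :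
    p (l ++ [a]) ≤ p l := by
  rw [← hp l]; exact ENNReal.le_tsum a

private lemma mexit_mass_le_one {S : Type*} [Countable S] (p : List S → ℝ≥0∞)
    (hp : ∀ l : List S, ∑' a : S, p (l ++ [a]) = p l)
    (s₀ : S) (hp0 : p [s₀] = 1)
    (hstart : ∀ l : List S, l.length = 1 → l ≠ [s₀] → p l = 0) :
    ∀ (l : List S), l ≠ [] → p l ≤ 1 := by
  have key : ∀ (l : List S) (a : S), p (l ++ [a]) ≤ 1 := by
    intro l
    induction l using List.reverseRecOn with
    | nil =>
      intro a
      by_cases h : a = s₀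
      · simp [h, hp0]
      · rw [show ([] : List S) ++ [a] = [a] by simp,
          hstart [a] (by simp) (by simp [h])]
        exact zero_le_one
    | append_singleton l b ih =>
      intro a
      exact (mexit_concat_le p hp _ a).trans (ih b)
  intro l hl
  conv_lhs => rw [← List.dropLast_append_getLast hl]
  exact key _ _

private lemma mexit_step {S : Type*} [Countable S] (p q : List S → ℝ≥0∞)
    (hq : ∀ l : List S, ∑' a : S, q (l ++ [a]) = q l)
    (δ : ℝ≥0∞)
    (hratio : ∀ (l : List S) (a : S), p (l ++ [a]) * q l ≥ (1 - δ) * (q (l ++ [a]) * p l))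
    (l : List S) (hql : q l ≤ 1) :
    ∑' a : S, min (p (l ++ [a])) (q (l ++ [a])) ≥ (1 - δ) * min (p l) (q l) := by
  set m := min (p l) (q l) with hm
  by_cases hm0 : m = 0
  · simp [hm0]
  have hq0 : q l ≠ 0 := by
    intro h
    exact hm0 (by simp [hm, h])
  have hqt : q l ≠ ⊤ := ne_top_of_le_ne_top ENNReal.one_ne_top hql
  have key : ∀ a : S, (1 - δ) * (m / q l) * q (l ++ [a])
      ≤ min (p (l ++ [a])) (q (l ++ [a])) := by
    intro a
    apply le_min
    · have h1 : (1 - δ) * q (l ++ [a]) * p l / q l ≤ p (l ++ [a]) := by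
        rw [ENNReal.div_le_iff hq0 hqt]
        calc (1 - δ) * q (l ++ [a]) * p l = (1 - δ) * (q (l ++ [a]) * p l) := by ring
          _ ≤ p (l ++ [a]) * q l := hratio l a
      refine le_trans ?_ h1
      rw [div_eq_mul_inv, div_eq_mul_inv]
      calc (1 - δ) * (m * (q l)⁻¹) * q (l ++ [a])
          = (1 - δ) * q (l ++ [a]) * m * (q l)⁻¹ := by ring
        _ ≤ (1 - δ) * q (l ++ [a]) * p l * (q l)⁻¹ := by
            gcongr
            exact min_le_left _ _
    · have h2 : m / q l ≤ 1 := by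
        rw [div_eq_mul_inv]
        calc m * (q l)⁻¹ ≤ q l * (q l)⁻¹ := by gcongr; exact min_le_right _ _
          _ = 1 := ENNReal.mul_inv_cancel hq0 hqt
      calc (1 - δ) * (m / q l) * q (l ++ [a]) ≤ 1 * 1 * q (l ++ [a]) := by
            gcongr
            exact tsub_le_self
        _ = q (l ++ [a]) := by ring
  calc (1 - δ) * m = (1 - δ) * (m / q l * q l) := by
        rw [ENNReal.div_mul_cancel hq0 hqt]
    _ = (1 - δ) * (m / q l) * q l := by ring
    _ = ∑' a : S, (1 - δ) * (m / q l) * q (l ++ [a]) := by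
        rw [ENNReal.tsum_mul_left, hq l]
    _ ≤ ∑' a : S, min (p (l ++ [a])) (q (l ++ [a])) := ENNReal.tsum_le_tsum key

private def mexit_consEquiv (S : Type*) (n : ℕ) :
    ({l : List S // l.length = n + 1} × S) ≃ {l : List S // l.length = n + 2} where
  toFun x := ⟨x.1.1 ++ [x.2], by simp [x.1.2]⟩
  invFun l := (⟨l.1.dropLast, by simp [l.2]⟩,
    l.1.getLast (by
      intro h
      have := l.2
      simp [h] at this))
  left_inv x := by
    obtain ⟨⟨l, hl⟩, a⟩ := x
    simp [Prod.ext_iff, Subtype.ext_iff, List.dropLast_concat, List.getLast_concat]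
  right_inv l := by
    obtain ⟨l, hl⟩ := l
    simp [Subtype.ext_iff, List.dropLast_append_getLast]

/-- Under the MEXIT rate bound hypotheses (one-step conditional ratios at least `1 − δ`,
common start `s₀`), the probability of no MEXIT by time `n` is at least `(1 − δ)ⁿ`:
`Σ_s min(p(s), q(s)) ≥ (1 − δ)ⁿ` over genealogies of length `n+1`; consequently the
expected MEXIT time `Σ_{n} P[no MEXIT by time n]` is at least `1/δ`. -/
theorem stmt4 {S : Type*} [Countable S] (p q : List S → ℝ≥0∞)
    (hp : ∀ l : List S, ∑' a : S, p (l ++ [a]) = p l)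
    (hq : ∀ l : List S, ∑' a : S, q (l ++ [a]) = q l)
    (δ : ℝ≥0∞) (hδ : 0 < δ) (hδ1 : δ ≤ 1)
    (hratio : ∀ (l : List S) (a : S), p (l ++ [a]) * q l ≥ (1 - δ) * (q (l ++ [a]) * p l))
    (s₀ : S) (hp0 : p [s₀] = 1) (hq0 : q [s₀] = 1)
    (hstart : ∀ l : List S, l.length = 1 → l ≠ [s₀] → p l = 0 ∧ q l = 0) :
    (∀ n : ℕ,
        ∑' l : {l : List S // l.length = n + 1}, min (p l.1) (q l.1) ≥ (1 - δ) ^ n)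
    ∧ (∑' (n : ℕ) (l : {l : List S // l.length = n + 1}), min (p l.1) (q l.1) ≥ 1 / δ) := by
  have hqone : ∀ (l : List S), l ≠ [] → q l ≤ 1 :=
    mexit_mass_le_one q hq s₀ hq0 (fun l h1 h2 => (hstart l h1 h2).2)
  have part1 : ∀ n : ℕ,
      ∑' l : {l : List S // l.length = n + 1}, min (p l.1) (q l.1) ≥ (1 - δ) ^ n := by
    intro n
    induction n with
    | zero =>
      have h0 : ∑' l : {l : List S // l.length = 0 + 1}, min (p l.1) (q l.1) = 1 := by
        rw [tsum_eq_single (⟨[s₀], rfl⟩ : {l : List S // l.length = 0 + 1})]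
        · simp [hp0, hq0]
        · intro l hl
          obtain ⟨a, ha⟩ := List.length_eq_one_iff.mp l.2
          have hne : l.1 ≠ [s₀] := by
            intro h
            exact hl (Subtype.ext h)
          rw [(hstart l.1 l.2 hne).1]
          simp
      rw [h0]
      simp
    | succ n ih =>
      have hrw : ∑' l : {l : List S // l.length = n + 1 + 1}, min (p l.1) (q l.1)
          = ∑' (l : {l : List S // l.length = n + 1}) (a : S),
              min (p (l.1 ++ [a])) (q (l.1 ++ [a])) := by
        rw [← Equiv.tsum_eq (mexit_consEquiv S n) (fun l => min (p l.1) (q l.1))]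
        simp only [mexit_consEquiv, Equiv.coe_fn_mk]
        exact ENNReal.tsum_prod (f := fun (l : {l : List S // l.length = n + 1}) (a : S) => min (p (l.1 ++ [a])) (q (l.1 ++ [a])))
      rw [hrw]
      calc (1 - δ) ^ (n + 1) = (1 - δ) * (1 - δ) ^ n := by ring
        _ ≤ (1 - δ) * ∑' l : {l : List S // l.length = n + 1}, min (p l.1) (q l.1) := by
            gcongr
        _ = ∑' l : {l : List S // l.length = n + 1}, (1 - δ) * min (p l.1) (q l.1) :=
            ENNReal.tsum_mul_left.symm
        _ ≤ ∑' (l : {l : List S // l.length = n + 1}) (a : S),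
              min (p (l.1 ++ [a])) (q (l.1 ++ [a])) := by
            refine ENNReal.tsum_le_tsum fun l => ?_
            refine mexit_step p q hq δ hratio l.1 (hqone l.1 ?_)
            intro h
            have := l.2
            simp [h] at this
  refine ⟨part1, ?_⟩
  calc 1 / δ = δ⁻¹ := one_div δ
    _ = (1 - (1 - δ))⁻¹ := by rw [ENNReal.sub_sub_cancel ENNReal.one_ne_top hδ1]
    _ = ∑' n : ℕ, (1 - δ) ^ n := (ENNReal.tsum_geometric _).symm
    _ ≤ ∑' (n : ℕ) (l : {l : List S // l.length = n + 1}), min (p l.1) (q l.1) :=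
        ENNReal.tsum_le_tsum fun n => part1 n
end

section
/- Let p and q be path probabilities of two processes on a countable state space. For a path s of length n, define R(s) = p(s)/q(s) and the one-step conditional q(a|s) = q(s·a)/q(s). Then the conditional non-MEXIT probability (Σ_a min(p(s·a), q(s·a))) / min(p(s), q(s)) equals E_{q(a|s)}[ (R(s·a) ∧ 1) / (R(s) ∧ 1) ]. In particular, if either R(s) < 1 and R(s·a) < 1 for all a, or R(s) > 1 and R(s·a) > 1 for all a, then this conditional non-MEXIT probability equals 1. -/
lemma min_div_one {x y : ℝ} (hy : 0 < y) : min (x / y) 1 = min x y / y := by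
  rw [← div_self hy.ne', min_div_div_right hy.le]

/-- Radon-Nikodym perspective on MEXIT: with `R(s) = p(s)/q(s)` and one-step conditionals
`q(a|s) = q(s·a)/q(s)`, the conditional non-MEXIT probability
`(Σ_a min(p(s·a), q(s·a))) / min(p(s), q(s))` equals
`E_{q(a|s)}[(R(s·a) ∧ 1)/(R(s) ∧ 1)]`; in particular it equals `1` whenever `R` stays
strictly below `1`, or strictly above `1`, at `s` and all its one-step extensions. -/
theorem stmt5 {S : Type*} [Countable S] (p q : List S → ℝ)
    (hp_pos : ∀ l : List S, 0 < p l) (hq_pos : ∀ l : List S, 0 < q l)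
    (hp : ∀ l : List S, HasSum (fun a : S => p (l ++ [a])) (p l))
    (hq : ∀ l : List S, HasSum (fun a : S => q (l ++ [a])) (q l))
    (l : List S) :
    ((∑' a : S, min (p (l ++ [a])) (q (l ++ [a]))) / min (p l) (q l)
      = ∑' a : S, (q (l ++ [a]) / q l) *
          (min (p (l ++ [a]) / q (l ++ [a])) 1 / min (p l / q l) 1))
    ∧ (((p l / q l < 1 ∧ ∀ a : S, p (l ++ [a]) / q (l ++ [a]) < 1) ∨
        (p l / q l > 1 ∧ ∀ a : S, p (l ++ [a]) / q (l ++ [a]) > 1)) →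
       (∑' a : S, min (p (l ++ [a])) (q (l ++ [a]))) / min (p l) (q l) = 1) := by
  have key : ∀ a : S, (q (l ++ [a]) / q l) *
      (min (p (l ++ [a]) / q (l ++ [a])) 1 / min (p l / q l) 1)
      = min (p (l ++ [a])) (q (l ++ [a])) / min (p l) (q l) := by
    intro a
    rw [min_div_one (hq_pos (l ++ [a])), min_div_one (hq_pos l)]
    have h1 := (hq_pos (l ++ [a])).ne'
    have h2 := (hq_pos l).ne'
    have h3 : min (p l) (q l) ≠ 0 := (lt_min (hp_pos l) (hq_pos l)).ne'
    field_simp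
  constructor
  · rw [← tsum_div_const]
    exact tsum_congr fun a => (key a).symm
  · rintro (⟨h0, ha⟩ | ⟨h0, ha⟩)
    · have e1 : ∀ a : S, min (p (l ++ [a])) (q (l ++ [a])) = p (l ++ [a]) := fun a =>
        min_eq_left (le_of_lt ((div_lt_one (hq_pos _)).mp (ha a)))
      have e0 : min (p l) (q l) = p l := min_eq_left (le_of_lt ((div_lt_one (hq_pos l)).mp h0))
      rw [e0, tsum_congr e1, (hp l).tsum_eq, div_self (hp_pos l).ne']
    · have e1 : ∀ a : S, min (p (l ++ [a])) (q (l ++ [a])) = q (l ++ [a]) := fun a =>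
        min_eq_right (le_of_lt ((one_lt_div (hq_pos _)).mp (ha a)))
      have e0 : min (p l) (q l) = q l := min_eq_right (le_of_lt ((one_lt_div (hq_pos l)).mp h0))
      rw [e0, tsum_congr e1, (hq l).tsum_eq, div_self (hq_pos l).ne']
end

section
/- If N ~ Normal(−σ²/2, σ²) with σ > 0 and A > 0 is a constant, then E[min(1, A·e^N)] = Φ(log A / σ − σ/2) + A · Φ(−σ/2 − log A / σ), where Φ is the standard normal CDF. -/
open MeasureTheory ProbabilityTheory

/-- The standard normal cumulative distribution function. -/
noncomputable def stdNormalCDF (y : ℝ) : ℝ :=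
  ((gaussianReal 0 1) (Set.Iic y)).toReal

lemma sq_toNNReal_eq (σ : ℝ) (hσ : 0 < σ) :
    (⟨σ ^ 2, sq_nonneg σ⟩ : NNReal) * 1 = (σ ^ 2).toNNReal := by
  ext; simp [Real.coe_toNNReal _ (sq_nonneg σ)]

lemma gauss_eq_map (m σ : ℝ) (hσ : 0 < σ) :
    gaussianReal m ((σ ^ 2).toNNReal)
      = ((gaussianReal 0 1).map (σ * ·)).map (· + m) := by
  rw [gaussianReal_map_const_mul, gaussianReal_map_add_const]
  congr 1
  · ring
  · ext; simp [Real.coe_toNNReal _ (sq_nonneg σ)]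

lemma gauss_Iic (m σ c : ℝ) (hσ : 0 < σ) :
    (gaussianReal m ((σ ^ 2).toNNReal)) (Set.Iic c)
      = (gaussianReal 0 1) (Set.Iic ((c - m) / σ)) := by
  rw [gauss_eq_map m σ hσ, Measure.map_apply (measurable_id'.add_const m) measurableSet_Iic,
    Measure.map_apply (measurable_id'.const_mul σ)]
  · congr 1
    ext x
    simp only [Set.mem_preimage, Set.mem_Iic]
    rw [le_div_iff₀ hσ, mul_comm]
    constructor
    · intro h; linarith
    · intro h; linarith
  · exact measurable_id'.add_const m measurableSet_Iic

lemma tilt (m σ : ℝ) (hσ : 0 < σ) (x : ℝ) :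
    Real.exp x * gaussianPDFReal m ((σ ^ 2).toNNReal) x
      = Real.exp (m + σ ^ 2 / 2) * gaussianPDFReal (m + σ ^ 2) ((σ ^ 2).toNNReal) x := by
  have hv : ((σ ^ 2).toNNReal : ℝ) = σ ^ 2 := Real.coe_toNNReal _ (sq_nonneg σ)
  have h2 : (0:ℝ) < σ ^ 2 := by positivity
  simp only [gaussianPDFReal, hv]
  rw [mul_comm (Real.exp x), mul_assoc, ← Real.exp_add, mul_left_comm, ← Real.exp_add]
  congr 1
  field_simp
  ring

lemma std_sym (t : ℝ) :
    (gaussianReal 0 1) (Set.Iic (-t)) = 1 - (gaussianReal 0 1) (Set.Iic t) := by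
  have hmap : (gaussianReal 0 1).map (fun x : ℝ => -x) = gaussianReal 0 1 := by
    have := gaussianReal_map_const_mul (μ := 0) (v := 1) (-1)
    simp only [neg_one_mul, mul_zero] at this
    convert this using 2
    ext; simp
  have hatom : ∀ x : ℝ, (gaussianReal 0 1) {x} = 0 := fun x =>
    gaussianReal_absolutelyContinuous 0 one_ne_zero (by simp)
  have h1 : (gaussianReal 0 1) (Set.Iic (-t)) = (gaussianReal 0 1) (Set.Ici t) := by
    conv_lhs => rw [← hmap]
    rw [Measure.map_apply measurable_neg measurableSet_Iic]
    congr 1; ext x; simp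
  rw [h1, ← Set.compl_Iio, measure_compl measurableSet_Iio (measure_ne_top _ _),
    measure_univ, measure_congr (Iio_ae_eq_Iic' (hatom t))]

lemma stdNormalCDF_neg (t : ℝ) : stdNormalCDF (-t) = 1 - stdNormalCDF t := by
  unfold stdNormalCDF
  rw [std_sym, ENNReal.toReal_sub_of_le prob_le_one ENNReal.one_ne_top, ENNReal.toReal_one]

lemma gauss_setIntegral (m : ℝ) {v : NNReal} (hv : v ≠ 0) (g : ℝ → ℝ) (hg : Measurable g)
    {s : Set ℝ} (hs : MeasurableSet s) :
    ∫ x in s, g x ∂(gaussianReal m v) = ∫ x in s, gaussianPDFReal m v x * g x := by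
  rw [gaussianReal_of_var_ne_zero m hv, gaussianPDF_def]
  have : (fun x => ENNReal.ofReal (gaussianPDFReal m v x))
      = fun x => ((Real.toNNReal (gaussianPDFReal m v x) : NNReal) : ENNReal) := rfl
  rw [this, setIntegral_withDensity_eq_setIntegral_smul
    ((measurable_gaussianPDFReal m v).real_toNNReal) g hs]
  refine setIntegral_congr_fun hs fun x _ => ?_
  rw [NNReal.smul_def, Real.coe_toNNReal _ (gaussianPDFReal_nonneg m v x), smul_eq_mul]

lemma gauss_Iic_toReal (m σ c : ℝ) (hσ : 0 < σ) :
    ((gaussianReal m ((σ ^ 2).toNNReal)) (Set.Iic c)).toReal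
      = stdNormalCDF ((c - m) / σ) := by
  rw [gauss_Iic m σ c hσ]; unfold stdNormalCDF; rfl

/-- For `N ~ Normal(−σ²/2, σ²)` and `A > 0`,
`E[min(1, A·e^N)] = Φ(log A/σ − σ/2) + A·Φ(−σ/2 − log A/σ)`. -/
theorem stmt6 (σ A : ℝ) (hσ : 0 < σ) (hA : 0 < A) :
    ∫ x, min 1 (A * Real.exp x) ∂(gaussianReal (-σ ^ 2 / 2) ((σ ^ 2).toNNReal))
      = stdNormalCDF (Real.log A / σ - σ / 2)
        + A * stdNormalCDF (-(σ / 2) - Real.log A / σ) := by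
  set m : ℝ := -σ ^ 2 / 2 with hm
  set v : NNReal := (σ ^ 2).toNNReal with hvdef
  have hv : v ≠ 0 := by
    rw [hvdef]
    exact (Real.toNNReal_pos.mpr (by positivity)).ne'
  set μ := gaussianReal m v with hμ
  set c : ℝ := -Real.log A with hc
  set f : ℝ → ℝ := fun x => min 1 (A * Real.exp x) with hf
  have hfm : Measurable f := measurable_const.min ((Real.measurable_exp).const_mul A)
  have hfint : Integrable f μ := by
    refine Integrable.mono' (integrable_const (1:ℝ)) hfm.aestronglyMeasurable
      (Filter.Eventually.of_forall fun x => ?_)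
    rw [Real.norm_eq_abs, abs_le]
    constructor
    · have : (0:ℝ) ≤ f x := le_min zero_le_one (by positivity)
      linarith
    · exact min_le_left _ _
  -- split
  rw [← intervalIntegral.integral_Iic_add_Ioi (b := c) hfint.integrableOn hfint.integrableOn]
  -- Iic part
  have hIic : ∫ x in Set.Iic c, f x ∂μ
      = A * stdNormalCDF (-(σ / 2) - Real.log A / σ) := by
    have h1 : ∫ x in Set.Iic c, f x ∂μ = ∫ x in Set.Iic c, A * Real.exp x ∂μ := by
      refine setIntegral_congr_fun measurableSet_Iic fun x hx => ?_
      refine min_eq_right ?_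
      have : Real.exp x ≤ Real.exp c := Real.exp_le_exp.mpr hx
      have hec : Real.exp c = A⁻¹ := by
        rw [hc, Real.exp_neg, Real.exp_log hA]
      calc A * Real.exp x ≤ A * A⁻¹ := by
            rw [← hec]; exact mul_le_mul_of_nonneg_left this hA.le
        _ = 1 := mul_inv_cancel₀ hA.ne'
    rw [h1, gauss_setIntegral m hv _ ((Real.measurable_exp).const_mul A) measurableSet_Iic]
    have h2 : ∀ x, gaussianPDFReal m v x * (A * Real.exp x)
        = A * (Real.exp (m + σ ^ 2 / 2) * gaussianPDFReal (m + σ ^ 2) v x) := by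
      intro x
      rw [← tilt m σ hσ x]; ring
    simp_rw [h2]
    rw [integral_const_mul, integral_const_mul]
    have hexp0 : Real.exp (m + σ ^ 2 / 2) = 1 := by
      rw [show m + σ ^ 2 / 2 = 0 by rw [hm]; ring, Real.exp_zero]
    rw [hexp0, one_mul]
    have h3 : ∫ x in Set.Iic c, gaussianPDFReal (m + σ ^ 2) v x
        = ((gaussianReal (m + σ ^ 2) v) (Set.Iic c)).toReal := by
      rw [gaussianReal_apply_eq_integral _ hv, ENNReal.toReal_ofReal
        (integral_nonneg (gaussianPDFReal_nonneg _ _))]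
    rw [h3, gauss_Iic_toReal _ σ c hσ]
    congr 2
    rw [hc, hm]
    field_simp
    ring
  -- Ioi part
  have hIoi : ∫ x in Set.Ioi c, f x ∂μ = stdNormalCDF (Real.log A / σ - σ / 2) := by
    have h1 : ∫ x in Set.Ioi c, f x ∂μ = ∫ x in Set.Ioi c, (1:ℝ) ∂μ := by
      refine setIntegral_congr_fun measurableSet_Ioi fun x hx => ?_
      refine min_eq_left ?_
      have hec : Real.exp c = A⁻¹ := by
        rw [hc, Real.exp_neg, Real.exp_log hA]
      have : Real.exp c ≤ Real.exp x := Real.exp_le_exp.mpr (le_of_lt hx)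
      calc (1:ℝ) = A * A⁻¹ := (mul_inv_cancel₀ hA.ne').symm
        _ = A * Real.exp c := by rw [hec]
        _ ≤ A * Real.exp x := mul_le_mul_of_nonneg_left this hA.le
    rw [h1, setIntegral_const, smul_eq_mul, mul_one]
    have h2 : μ (Set.Ioi c) = 1 - μ (Set.Iic c) := by
      rw [← Set.compl_Iic, measure_compl measurableSet_Iic (measure_ne_top _ _), measure_univ]
    rw [measureReal_def, h2, ENNReal.toReal_sub_of_le prob_le_one ENNReal.one_ne_top, ENNReal.toReal_one,
      hμ, hvdef, gauss_Iic_toReal m σ c hσ]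
    have h4 : (c - m) / σ = -(Real.log A / σ - σ / 2) := by
      rw [hc, hm]; field_simp; ring
    rw [h4, stdNormalCDF_neg]
    ring
  rw [hIic, hIoi]
  ring
end

section
/- Define α̃(A, σ) = Φ((log A)/σ − σ/2) + A·Φ(−σ/2 − (log A)/σ) for A > 0, σ > 0. Then: (i) α̃(A, σ) ≤ min(1, A); (ii) lim_{σ→0+} α̃(A, σ) = min(1, A); (iii) d/dσ α̃(A, σ) = −φ((log A)/σ − σ/2); (iv) −1/√(2π) ≤ d/dσ α̃(A, σ) ≤ 0; (v) α̃(A, σ) ≥ min(1, A) − σ/√(2π); and (vi) α̃(A, σ)/min(1, A) ≥ 1 − σ/√(2π). -/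
open MeasureTheory ProbabilityTheory Filter

/-- The standard normal density. -/
noncomputable def stdNormalPDF (y : ℝ) : ℝ :=
  (Real.sqrt (2 * Real.pi))⁻¹ * Real.exp (-y ^ 2 / 2)

/-- The noisy Metropolis-Hastings expected acceptance probability. -/
noncomputable def alphaTilde (A σ : ℝ) : ℝ :=
  stdNormalCDF (Real.log A / σ - σ / 2) + A * stdNormalCDF (-(σ / 2) - Real.log A / σ)

lemma pdf_eq : gaussianPDFReal 0 1 = stdNormalPDF := by
  ext x
  simp [gaussianPDFReal, stdNormalPDF]

lemma pdf_cont : Continuous stdNormalPDF := by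
  unfold stdNormalPDF
  continuity

lemma pdf_integrable : Integrable stdNormalPDF := pdf_eq ▸ integrable_gaussianPDFReal 0 1

lemma pdf_nonneg (x : ℝ) : 0 ≤ stdNormalPDF x := pdf_eq ▸ gaussianPDFReal_nonneg 0 1 x

lemma pdf_total : ∫ x, stdNormalPDF x = 1 := by
  rw [← pdf_eq]; exact integral_gaussianPDFReal_eq_one 0 one_ne_zero

lemma cdf_eq (y : ℝ) : stdNormalCDF y = ∫ t in Set.Iic y, stdNormalPDF t := by
  rw [stdNormalCDF, gaussianReal_apply_eq_integral 0 one_ne_zero, pdf_eq,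
    ENNReal.toReal_ofReal]
  exact setIntegral_nonneg measurableSet_Iic fun x _ => pdf_nonneg x

lemma cdf_hasDeriv (y : ℝ) : HasDerivAt stdNormalCDF (stdNormalPDF y) y := by
  have h : ∀ z : ℝ, stdNormalCDF z = stdNormalCDF 0 + ∫ t in (0:ℝ)..z, stdNormalPDF t := by
    intro z
    rw [cdf_eq, cdf_eq, ← intervalIntegral.integral_Iic_sub_Iic
      pdf_integrable.integrableOn pdf_integrable.integrableOn]
    ring
  have hd : HasDerivAt (fun z => stdNormalCDF 0 + ∫ t in (0:ℝ)..z, stdNormalPDF t)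
      (stdNormalPDF y) y := by
    refine HasDerivAt.const_add _ ?_
    exact intervalIntegral.integral_hasDerivAt_right
      (pdf_cont.intervalIntegrable _ _)
      (pdf_cont.stronglyMeasurable.stronglyMeasurableAtFilter)
      pdf_cont.continuousAt
  exact (funext h) ▸ hd

lemma cdf_cont : Continuous stdNormalCDF :=
  continuous_iff_continuousAt.2 fun y => (cdf_hasDeriv y).continuousAt

lemma cdf_symm (y : ℝ) : stdNormalCDF (-y) = 1 - stdNormalCDF y := by
  have h1 : (∫ t in Set.Iic y, stdNormalPDF t) + ∫ t in Set.Ioi y, stdNormalPDF t = 1 := by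
    rw [intervalIntegral.integral_Iic_add_Ioi pdf_integrable.integrableOn pdf_integrable.integrableOn, pdf_total]
  have h2 : (∫ t in Set.Iic (-y), stdNormalPDF t) = ∫ t in Set.Ioi y, stdNormalPDF t := by
    have := integral_comp_neg_Iic (-y) stdNormalPDF
    simp only [neg_neg] at this
    rw [← this]
    congr 1
    ext t
    simp [stdNormalPDF, neg_pow]
  rw [cdf_eq, cdf_eq, h2]
  linarith

lemma cdf_zero : stdNormalCDF 0 = 1 / 2 := by
  have := cdf_symm 0
  rw [neg_zero] at this
  linarith

lemma cdf_atTop : Tendsto stdNormalCDF atTop (nhds 1) := by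
  have h := tendsto_measure_Iic_atTop (gaussianReal 0 1)
  have : Tendsto (fun y => ((gaussianReal 0 1) (Set.Iic y)).toReal) atTop
      (nhds ((gaussianReal 0 1) Set.univ).toReal) :=
    (ENNReal.tendsto_toReal (by simp)).comp h
  simp only [measure_univ, ENNReal.toReal_one] at this
  exact this

lemma cdf_atBot : Tendsto stdNormalCDF atBot (nhds 0) := by
  have h : Tendsto (fun y : ℝ => 1 - stdNormalCDF (-y)) atBot (nhds 0) := by
    have := cdf_atTop.comp (tendsto_neg_atBot_atTop)
    have h2 : Tendsto (fun y : ℝ => 1 - stdNormalCDF (-y)) atBot (nhds (1 - 1)) :=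
      tendsto_const_nhds.sub this
    simpa using h2
  refine h.congr fun y => ?_
  rw [cdf_symm]; ring

lemma pdf_le (x : ℝ) : stdNormalPDF x ≤ (Real.sqrt (2 * Real.pi))⁻¹ := by
  unfold stdNormalPDF
  have h : Real.exp (-x ^ 2 / 2) ≤ 1 := by
    rw [Real.exp_le_one_iff]; nlinarith [sq_nonneg x]
  calc (Real.sqrt (2 * Real.pi))⁻¹ * Real.exp (-x ^ 2 / 2)
      ≤ (Real.sqrt (2 * Real.pi))⁻¹ * 1 :=
        mul_le_mul_of_nonneg_left h (by positivity)
    _ = _ := mul_one _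

lemma key (A : ℝ) (hA : 0 < A) (σ : ℝ) (hσ : σ ≠ 0) :
    A * stdNormalPDF (-(σ/2) - Real.log A / σ) = stdNormalPDF (Real.log A / σ - σ/2) := by
  unfold stdNormalPDF
  rw [mul_comm A, mul_assoc, ← Real.exp_log hA, ← Real.exp_add]
  congr 2
  field_simp
  simp only [Real.log_exp]; ring

lemma alpha_hasDeriv (A : ℝ) (hA : 0 < A) (σ : ℝ) (hσ : 0 < σ) :
    HasDerivAt (fun u => alphaTilde A u)
      (-(stdNormalPDF (Real.log A / σ - σ / 2))) σ := by
  set c := Real.log A with hc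
  have hu : HasDerivAt (fun s : ℝ => c / s - s / 2) (c * -(σ ^ 2)⁻¹ - 1 / 2) σ := by
    have h1 : HasDerivAt (fun s : ℝ => c / s) (c * -(σ ^ 2)⁻¹) σ := by
      simpa [div_eq_mul_inv] using ((hasDerivAt_inv hσ.ne').const_mul c)
    exact h1.sub ((hasDerivAt_id σ).div_const 2)
  have hv : HasDerivAt (fun s : ℝ => -(s / 2) - c / s) (-(1 / 2) - c * -(σ ^ 2)⁻¹) σ := by
    have h1 : HasDerivAt (fun s : ℝ => c / s) (c * -(σ ^ 2)⁻¹) σ := by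
      simpa [div_eq_mul_inv] using ((hasDerivAt_inv hσ.ne').const_mul c)
    exact (((hasDerivAt_id σ).div_const 2).neg).sub h1
  have h1 := (cdf_hasDeriv (c / σ - σ / 2)).comp σ hu
  have h2 := ((cdf_hasDeriv (-(σ / 2) - c / σ)).comp σ hv).const_mul A
  have hsum := h1.add h2
  have hkey := key A hA σ hσ.ne'
  have hval : stdNormalPDF (c / σ - σ / 2) * (c * -(σ ^ 2)⁻¹ - 1 / 2) +
      A * (stdNormalPDF (-(σ / 2) - c / σ) * (-(1 / 2) - c * -(σ ^ 2)⁻¹))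
      = -(stdNormalPDF (Real.log A / σ - σ / 2)) := by
    rw [← hc]
    linear_combination (-(1 / 2) - c * -(σ ^ 2)⁻¹) * hkey
  rw [← hval]
  refine hsum.congr_of_eventuallyEq (Filter.Eventually.of_forall fun u => ?_)
  simp [alphaTilde, hc]

lemma tendsto_div_atTop {c : ℝ} (hc : 0 < c) :
    Tendsto (fun σ : ℝ => c / σ) (nhdsWithin 0 (Set.Ioi 0)) atTop := by
  have := tendsto_inv_nhdsGT_zero.const_mul_atTop hc
  simpa [div_eq_mul_inv] using this

lemma tendsto_half : Tendsto (fun σ : ℝ => σ / 2) (nhdsWithin 0 (Set.Ioi 0)) (nhds 0) := by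
  have : Tendsto (fun σ : ℝ => σ / 2) (nhds 0) (nhds (0 / 2)) :=
    (continuous_id.div_const 2).tendsto 0
  simpa using this.mono_left nhdsWithin_le_nhds

lemma alpha_tendsto (A : ℝ) (hA : 0 < A) :
    Tendsto (fun σ => alphaTilde A σ) (nhdsWithin 0 (Set.Ioi 0)) (nhds (min 1 A)) := by
  set c := Real.log A with hc
  have hhalf := tendsto_half
  have hneghalf : Tendsto (fun σ : ℝ => -(σ / 2)) (nhdsWithin 0 (Set.Ioi 0)) (nhds 0) := by
    simpa using hhalf.neg
  rcases lt_trichotomy c 0 with hclt | hceq | hcgt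
  · -- A < 1
    have hA1 : A < 1 := by rwa [hc, Real.log_neg_iff hA] at hclt
    have hmin : min 1 A = A := min_eq_right hA1.le
    have hcd : Tendsto (fun σ : ℝ => c / σ) (nhdsWithin 0 (Set.Ioi 0)) atBot := by
      have h := tendsto_neg_atTop_atBot.comp (tendsto_div_atTop (c := -c) (by linarith))
      refine h.congr fun σ => ?_
      simp [Function.comp, neg_div]
    have hu : Tendsto (fun σ : ℝ => c / σ - σ / 2) (nhdsWithin 0 (Set.Ioi 0)) atBot := by
      simpa [sub_eq_add_neg] using hcd.atBot_add hneghalf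
    have hv : Tendsto (fun σ : ℝ => -(σ / 2) - c / σ) (nhdsWithin 0 (Set.Ioi 0)) atTop := by
      have hcd2 : Tendsto (fun σ : ℝ => -(c / σ)) (nhdsWithin 0 (Set.Ioi 0)) atTop := by
        have := tendsto_div_atTop (c := -c) (by linarith)
        refine this.congr fun σ => by simp [neg_div]
      simpa [sub_eq_add_neg] using hneghalf.add_atTop hcd2
    have h1 := cdf_atBot.comp hu
    have h2 := cdf_atTop.comp hv
    have : Tendsto (fun σ => alphaTilde A σ) (nhdsWithin 0 (Set.Ioi 0)) (nhds (0 + A * 1)) := by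
      exact Tendsto.add h1 (h2.const_mul A)
    simpa [hmin, alphaTilde, ← hc] using this
  · -- A = 1
    have hA1 : A = 1 := by
      have := Real.exp_log hA
      rw [← hc, hceq, Real.exp_zero] at this
      exact this.symm
    have hcont := cdf_cont.tendsto 0
    have h0 : Tendsto (fun σ : ℝ => stdNormalCDF (-(σ / 2))) (nhdsWithin 0 (Set.Ioi 0))
        (nhds (stdNormalCDF 0)) := hcont.comp (by simpa using hneghalf)
    have : Tendsto (fun σ => alphaTilde A σ) (nhdsWithin 0 (Set.Ioi 0))
        (nhds (stdNormalCDF 0 + 1 * stdNormalCDF 0)) := by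
      have heq : ∀ σ : ℝ, alphaTilde A σ = stdNormalCDF (-(σ / 2)) + 1 * stdNormalCDF (-(σ / 2)) := by
        intro σ
        simp [alphaTilde, hA1, Real.log_one, zero_div, zero_sub, sub_zero, neg_div]
      simp_rw [heq]
      exact h0.add (h0.const_mul 1)
    have hval : stdNormalCDF 0 + 1 * stdNormalCDF 0 = min 1 A := by
      rw [cdf_zero, hA1]; norm_num
    rwa [hval] at this
  · -- A > 1
    have hA1 : 1 < A := by rwa [hc, Real.log_pos_iff hA.le] at hcgt
    have hmin : min 1 A = 1 := min_eq_left hA1.le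
    have hu : Tendsto (fun σ : ℝ => c / σ - σ / 2) (nhdsWithin 0 (Set.Ioi 0)) atTop := by
      simpa [sub_eq_add_neg] using (tendsto_div_atTop (c := c) hcgt).atTop_add hneghalf
    have hv : Tendsto (fun σ : ℝ => -(σ / 2) - c / σ) (nhdsWithin 0 (Set.Ioi 0)) atBot := by
      have hcd2 : Tendsto (fun σ : ℝ => -(c / σ)) (nhdsWithin 0 (Set.Ioi 0)) atBot := by
        exact tendsto_neg_atTop_atBot.comp (tendsto_div_atTop (c := c) hcgt)
      simpa [sub_eq_add_neg] using hneghalf.add_atBot hcd2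
    have h1 := cdf_atTop.comp hu
    have h2 := cdf_atBot.comp hv
    have : Tendsto (fun σ => alphaTilde A σ) (nhdsWithin 0 (Set.Ioi 0)) (nhds (1 + A * 0)) :=
      Tendsto.add h1 (h2.const_mul A)
    simpa [hmin, alphaTilde, ← hc] using this

lemma alpha_anti (A : ℝ) (hA : 0 < A) : AntitoneOn (fun u => alphaTilde A u) (Set.Ioi 0) := by
  refine antitoneOn_of_deriv_nonpos (convex_Ioi 0) ?_ ?_ ?_
  · exact fun x hx => ((alpha_hasDeriv A hA x hx).continuousAt.continuousWithinAt)
  · intro x hx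
    rw [interior_Ioi] at hx
    exact (alpha_hasDeriv A hA x hx).differentiableAt.differentiableWithinAt
  · intro x hx
    rw [interior_Ioi] at hx
    rw [(alpha_hasDeriv A hA x hx).deriv]
    simp [pdf_nonneg]

lemma part_i (A : ℝ) (hA : 0 < A) (σ : ℝ) (hσ : 0 < σ) : alphaTilde A σ ≤ min 1 A := by
  refine ge_of_tendsto (alpha_tendsto A hA) ?_
  filter_upwards [Ioo_mem_nhdsGT_of_mem (Set.left_mem_Ico.2 hσ)] with s hs
  exact alpha_anti A hA hs.1 hσ hs.2.le

lemma part_v (A : ℝ) (hA : 0 < A) (σ : ℝ) (hσ : 0 < σ) :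
    alphaTilde A σ ≥ min 1 A - σ / Real.sqrt (2 * Real.pi) := by
  set k := (Real.sqrt (2 * Real.pi))⁻¹ with hk
  have hg : ∀ x : ℝ, 0 < x → HasDerivAt (fun s => alphaTilde A s + s * k)
      (-(stdNormalPDF (Real.log A / x - x / 2)) + k) x := by
    intro x hx
    have h2 : HasDerivAt (fun s : ℝ => s * k) k x := by
      simpa using (hasDerivAt_id x).mul_const k
    exact (alpha_hasDeriv A hA x hx).add h2
  have hmono : MonotoneOn (fun s => alphaTilde A s + s * k) (Set.Ioi 0) := by
    refine monotoneOn_of_deriv_nonneg (convex_Ioi 0) ?_ ?_ ?_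
    · exact fun x hx => (hg x hx).continuousAt.continuousWithinAt
    · intro x hx
      rw [interior_Ioi] at hx
      exact (hg x hx).differentiableAt.differentiableWithinAt
    · intro x hx
      rw [interior_Ioi] at hx
      rw [(hg x hx).deriv]
      have := pdf_le (Real.log A / x - x / 2)
      rw [← hk] at this
      linarith
  have hlim : Tendsto (fun s => alphaTilde A s + s * k) (nhdsWithin 0 (Set.Ioi 0))
      (nhds (min 1 A + 0 * k)) := by
    refine (alpha_tendsto A hA).add ?_
    exact ((continuous_id.mul continuous_const).tendsto 0).mono_left nhdsWithin_le_nhds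
  have hle : min 1 A ≤ alphaTilde A σ + σ * k := by
    have h := le_of_tendsto (b := alphaTilde A σ + σ * k) hlim ?_
    · simpa using h
    filter_upwards [Ioo_mem_nhdsGT_of_mem (Set.left_mem_Ico.2 hσ)] with s hs
    exact hmono hs.1 hσ hs.2.le
  rw [ge_iff_le, sub_le_iff_le_add, div_eq_mul_inv, ← hk]
  linarith

lemma alpha_inv (A : ℝ) (hA : 0 < A) (σ : ℝ) : alphaTilde A⁻¹ σ = alphaTilde A σ / A := by
  unfold alphaTilde
  rw [Real.log_inv]
  have e1 : -Real.log A / σ - σ / 2 = -(σ / 2) - Real.log A / σ := by ring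
  have e2 : -(σ / 2) - -Real.log A / σ = Real.log A / σ - σ / 2 := by ring
  rw [e1, e2]
  field_simp
  ring

/-- Properties of the noisy MCMC acceptance probability `α̃(A, σ)`:
(i) `α̃(A, σ) ≤ min(1, A)`; (ii) `α̃(A, σ) → min(1, A)` as `σ → 0+`;
(iii) `d/dσ α̃(A, σ) = −φ(log A/σ − σ/2)`; (iv) `−1/√(2π) ≤ d/dσ α̃(A, σ) ≤ 0`;
(v) `α̃(A, σ) ≥ min(1, A) − σ/√(2π)`; (vi) `α̃(A, σ)/min(1, A) ≥ 1 − σ/√(2π)`. -/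
theorem stmt10 (A : ℝ) (hA : 0 < A) :
    (∀ σ : ℝ, 0 < σ → alphaTilde A σ ≤ min 1 A)
    ∧ Tendsto (fun σ => alphaTilde A σ) (nhdsWithin 0 (Set.Ioi 0)) (nhds (min 1 A))
    ∧ (∀ σ : ℝ, 0 < σ →
        HasDerivAt (fun u => alphaTilde A u) (-(stdNormalPDF (Real.log A / σ - σ / 2))) σ)
    ∧ (∀ σ : ℝ, 0 < σ →
        -(1 / Real.sqrt (2 * Real.pi)) ≤ deriv (fun u => alphaTilde A u) σ ∧
          deriv (fun u => alphaTilde A u) σ ≤ 0)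
    ∧ (∀ σ : ℝ, 0 < σ → alphaTilde A σ ≥ min 1 A - σ / Real.sqrt (2 * Real.pi))
    ∧ (∀ σ : ℝ, 0 < σ → alphaTilde A σ / min 1 A ≥ 1 - σ / Real.sqrt (2 * Real.pi)) := by
  refine ⟨fun σ hσ => part_i A hA σ hσ, alpha_tendsto A hA,
    fun σ hσ => alpha_hasDeriv A hA σ hσ, fun σ hσ => ?_, fun σ hσ => part_v A hA σ hσ,
    fun σ hσ => ?_⟩
  · rw [(alpha_hasDeriv A hA σ hσ).deriv]
    constructor
    · have := pdf_le (Real.log A / σ - σ / 2)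
      rw [one_div]
      linarith
    · have := pdf_nonneg (Real.log A / σ - σ / 2)
      linarith
  · rcases le_total 1 A with h1A | hA1
    · rw [min_eq_left h1A, div_one]
      have := part_v A hA σ hσ
      rw [min_eq_left h1A] at this
      linarith
    · rw [min_eq_right hA1]
      have hAi : (1 : ℝ) ≤ A⁻¹ := by
        have h1 := mul_inv_cancel₀ hA.ne'
        have h2 : (0:ℝ) < A⁻¹ := by positivity
        nlinarith
      have := part_v A⁻¹ (by positivity) σ hσ
      rw [min_eq_left hAi, alpha_inv A hA σ] at this
      exact this
end

section
/- Let P and P̃ be the path laws of a Metropolis-Hastings chain and the corresponding penalty-method noisy MCMC chain with Gaussian log-noise parameter σ. If each single-step likelihood ratio factor (for both acceptance and rejection moves) is at least 1 − σ/√(2π), then the Radon-Nikodym derivative of the length-t path laws satisfies dP̃ᵗ(s)/dPᵗ(s) ≥ (1 − σ/√(2π))ᵗ for all paths s. Consequently, the MEXIT time τ between the two chains satisfies P[τ > n] ≥ (1 − σ/√(2π))ⁿ and E[τ] ≥ √(2π)/σ. -/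
open scoped ENNReal

def pathEquiv {S : Type*} (n : ℕ) :
    {l : List S // l.length = n + 2} ≃ {l : List S // l.length = n + 1} × S where
  toFun l := (⟨l.1.dropLast, by simp [List.length_dropLast, l.2]⟩,
    l.1.getLast (by intro h; have := l.2; simp [h] at this))
  invFun x := ⟨x.1.1 ++ [x.2], by simp [x.1.2]⟩
  left_inv l := by
    apply Subtype.ext
    exact List.dropLast_append_getLast _
  right_inv x := by
    obtain ⟨⟨l, hl⟩, a⟩ := x
    simp [List.dropLast_concat, List.getLast_concat]

/-- Noisy MCMC versus Metropolis-Hastings: if each single-step likelihood-ratio factor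
between the noisy path law `q` and the Metropolis-Hastings path law `p` is at least
`1 − σ/√(2π)`, then the path Radon-Nikodym derivative satisfies
`dP̃ᵗ(s)/dPᵗ(s) ≥ (1 − σ/√(2π))ᵗ`, i.e. `q(s) ≥ (1 − σ/√(2π))ᵗ p(s)` for length-`t` paths;
consequently the MEXIT time `τ` satisfies `P[τ > n] ≥ (1 − σ/√(2π))ⁿ` and
`E[τ] ≥ √(2π)/σ`. -/
theorem stmt11 {S : Type*} [Countable S] (σ : ℝ) (hσ : 0 < σ)
    (p q : List S → ℝ≥0∞) (s₀ : S) (hp0 : p [s₀] = 1) (hq0 : q [s₀] = 1)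
    (hstart : ∀ l : List S, l.length = 1 → l ≠ [s₀] → p l = 0 ∧ q l = 0)
    (hpsum : ∀ l : List S, ∑' a : S, p (l ++ [a]) = p l)
    (hqsum : ∀ l : List S, ∑' a : S, q (l ++ [a]) = q l)
    (hstep : ∀ (l : List S) (a : S),
      q (l ++ [a]) * p l
        ≥ (1 - ENNReal.ofReal (σ / Real.sqrt (2 * Real.pi))) * (p (l ++ [a]) * q l)) :
    (∀ (t : ℕ) (l : List S), l.length = t + 1 →
        q l ≥ (1 - ENNReal.ofReal (σ / Real.sqrt (2 * Real.pi))) ^ t * p l)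
    ∧ (∀ n : ℕ,
        ∑' l : {l : List S // l.length = n + 1}, min (p l.1) (q l.1)
          ≥ (1 - ENNReal.ofReal (σ / Real.sqrt (2 * Real.pi))) ^ n)
    ∧ (∑' (n : ℕ) (l : {l : List S // l.length = n + 1}), min (p l.1) (q l.1)
        ≥ ENNReal.ofReal (Real.sqrt (2 * Real.pi) / σ)) := by
  set d := ENNReal.ofReal (σ / Real.sqrt (2 * Real.pi)) with hd
  set c := 1 - d with hc
  have hc1 : c ≤ 1 := tsub_le_self
  have hple : ∀ (l : List S) (a : S), p (l ++ [a]) ≤ p l := fun l a =>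
    (hpsum l) ▸ ENNReal.le_tsum a
  have hbound : ∀ t (l : List S), l.length = t + 1 → p l ≤ 1 := by
    intro t
    induction t with
    | zero =>
      intro l hl
      by_cases h : l = [s₀]
      · simp [h, hp0]
      · simp [(hstart l hl h).1]
    | succ t ih =>
      intro l hl
      have hne : l ≠ [] := by intro h; simp [h] at hl
      have hdc : l.dropLast ++ [l.getLast hne] = l := List.dropLast_append_getLast hne
      have hlen : l.dropLast.length = t + 1 := by simp [List.length_dropLast, hl]
      calc p l = p (l.dropLast ++ [l.getLast hne]) := by rw [hdc]
        _ ≤ p l.dropLast := hple _ _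
        _ ≤ 1 := ih _ hlen
  have main : ∀ (t : ℕ) (l : List S), l.length = t + 1 → q l ≥ c ^ t * p l := by
    intro t
    induction t with
    | zero =>
      intro l hl
      by_cases h : l = [s₀]
      · simp [h, hp0, hq0]
      · simp [(hstart l hl h).1]
    | succ t ih =>
      intro l hl
      have hne : l ≠ [] := by intro h; simp [h] at hl
      set l' := l.dropLast with hl'
      set a := l.getLast hne with ha
      have hdc : l' ++ [a] = l := List.dropLast_append_getLast hne
      have hlen : l'.length = t + 1 := by simp [hl', List.length_dropLast, hl]
      by_cases hp' : p l' = 0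
      · have h0 : p (l' ++ [a]) = 0 := by
          have h0' : ∑' b : S, p (l' ++ [b]) = 0 := by rw [hpsum l', hp']
          exact (ENNReal.tsum_eq_zero.mp h0') a
        rw [← hdc, h0, mul_zero]
        exact zero_le
      · have hfin : p l' ≠ ⊤ := ((hbound t l' hlen).trans_lt (by norm_num)).ne
        have h1 := hstep l' a
        have h2 : c * (p (l' ++ [a]) * (c ^ t * p l')) ≤ c * (p (l' ++ [a]) * q l') :=
          mul_le_mul_right (mul_le_mul_right (ih l' hlen) _) _
        have h3 : c ^ (t + 1) * p (l' ++ [a]) * p l' ≤ q (l' ++ [a]) * p l' := by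
          calc c ^ (t + 1) * p (l' ++ [a]) * p l'
              = c * (p (l' ++ [a]) * (c ^ t * p l')) := by ring
            _ ≤ c * (p (l' ++ [a]) * q l') := h2
            _ ≤ q (l' ++ [a]) * p l' := h1
        have h4 := (ENNReal.mul_le_mul_iff_left hp' hfin).mp h3
        rw [← hdc]
        exact h4
  -- sum of p over length n+1 paths is 1
  have hsum1 : ∀ n : ℕ, ∑' l : {l : List S // l.length = n + 1}, p l.1 = 1 := by
      intro n
      induction n with
      | zero =>
        rw [tsum_eq_single (⟨[s₀], rfl⟩ : {l : List S // l.length = 0 + 1})]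
        · exact hp0
        · intro b hb
          refine (hstart b.1 b.2 ?_).1
          intro h
          exact hb (Subtype.ext h)
      | succ n ih =>
        have he := Equiv.tsum_eq (pathEquiv (S := S) n).symm
          (fun l : {l : List S // l.length = n + 2} => p l.1)
        rw [← he]
        have : ∀ x : {l : List S // l.length = n + 1} × S,
            p ((pathEquiv (S := S) n).symm x).1 = p (x.1.1 ++ [x.2]) := fun x => rfl
        simp_rw [this]
        rw [ENNReal.tsum_prod (f := fun (a : {l : List S // l.length = n + 1}) (b : S) => p (a.1 ++ [b]))]
        simp_rw [hpsum]
        exact ih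
  have key : ∀ n : ℕ, ∑' l : {l : List S // l.length = n + 1}, min (p l.1) (q l.1)
      ≥ c ^ n := by
    intro n
    calc (c : ℝ≥0∞) ^ n = c ^ n * 1 := (mul_one _).symm
      _ = c ^ n * ∑' l : {l : List S // l.length = n + 1}, p l.1 := by rw [hsum1 n]
      _ = ∑' l : {l : List S // l.length = n + 1}, c ^ n * p l.1 := ENNReal.tsum_mul_left.symm
      _ ≤ ∑' l : {l : List S // l.length = n + 1}, min (p l.1) (q l.1) := by
          apply ENNReal.tsum_le_tsum
          intro l
          refine le_min ?_ (main n l.1 l.2)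
          calc c ^ n * p l.1 ≤ 1 * p l.1 :=
                mul_le_mul_left (pow_le_one' hc1 n) _
            _ = p l.1 := one_mul _
  refine ⟨main, key, ?_⟩
  · have hpos : 0 < σ / Real.sqrt (2 * Real.pi) :=
      div_pos hσ (Real.sqrt_pos.mpr (by positivity))
    calc ENNReal.ofReal (Real.sqrt (2 * Real.pi) / σ)
        = d⁻¹ := by
          rw [hd, ← ENNReal.ofReal_inv_of_pos hpos, inv_div]
      _ ≤ (1 - c)⁻¹ := ENNReal.inv_le_inv' (by rw [hc]; exact tsub_tsub_le)
      _ = ∑' n : ℕ, c ^ n := (ENNReal.tsum_geometric c).symm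
      _ ≤ ∑' (n : ℕ) (l : {l : List S // l.length = n + 1}), min (p l.1) (q l.1) :=
          ENNReal.tsum_le_tsum fun n => key n
end

section
/- (Recognition lemma for maximal coupling.) Let (E, ℰ) be a standard Borel space, and let m* be a coupling of probability measures μ⁺ = Law(X⁺) and μ⁻ = Law(X⁻) on E. Define ν^{±,*}(D) = m*[X^± ∈ D, X⁺ ≠ X⁻]. If ν^{+,*} and ν^{−,*} are supported by disjoint measurable sets, then m* is a maximal coupling, i.e., m*(X⁺ = X⁻) = (μ⁺ ∧ μ⁻)(E), and moreover (μ⁺ ∧ μ⁻)(D) = m*[X⁺ ∈ D, X⁺ = X⁻] for all D ∈ ℰ. -/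
open MeasureTheory

/-- Recognition lemma for maximal coupling: if `m*` is a coupling of `μ⁺` and `μ⁻` such
that the two off-diagonal marginal measures `ν^{±,*}(D) = m*[X^± ∈ D, X⁺ ≠ X⁻]` are
supported by disjoint measurable sets, then `m*` is maximal:
`m*(X⁺ = X⁻) = (μ⁺ ∧ μ⁻)(E)`, and moreover
`(μ⁺ ∧ μ⁻)(D) = m*[X⁺ ∈ D, X⁺ = X⁻]` for all measurable `D`. -/
theorem stmt13 {E : Type*} [MeasurableSpace E] [StandardBorelSpace E]
    (m : Measure (E × E)) [IsProbabilityMeasure m] (μp μm : Measure E)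
    (h1 : m.map Prod.fst = μp) (h2 : m.map Prod.snd = μm)
    (Sp Sm : Set E) (hSp : MeasurableSet Sp) (hSm : MeasurableSet Sm)
    (hdisj : Disjoint Sp Sm)
    (hsuppP : ∀ D : Set E, MeasurableSet D →
      m {x : E × E | x.1 ∈ D ∧ x.1 ≠ x.2} = m {x : E × E | x.1 ∈ D ∩ Sp ∧ x.1 ≠ x.2})
    (hsuppM : ∀ D : Set E, MeasurableSet D →
      m {x : E × E | x.2 ∈ D ∧ x.1 ≠ x.2} = m {x : E × E | x.2 ∈ D ∩ Sm ∧ x.1 ≠ x.2}) :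
    m {x : E × E | x.1 = x.2} = (μp ⊓ μm) Set.univ
    ∧ (∀ D : Set E, MeasurableSet D →
        (μp ⊓ μm) D = m {x : E × E | x.1 ∈ D ∧ x.1 = x.2}) := by
  have hd : MeasurableSet {x : E × E | x.1 = x.2} := by
    letI := upgradeStandardBorel E
    exact MeasureTheory.StronglyMeasurable.measurableSet_eq_fun
      measurable_fst.stronglyMeasurable measurable_snd.stronglyMeasurable
  set γ : Measure E := (m.restrict {x : E × E | x.1 = x.2}).map Prod.fst with hγdef
  have hγ : ∀ D : Set E, MeasurableSet D →
      γ D = m {x : E × E | x.1 ∈ D ∧ x.1 = x.2} := by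
    intro D hD
    rw [hγdef, Measure.map_apply measurable_fst hD,
      Measure.restrict_apply (measurable_fst hD)]
    rfl
  -- splitting identities
  have hsplitP : ∀ D : Set E, MeasurableSet D →
      μp D = m {x : E × E | x.1 ∈ D ∧ x.1 = x.2} + m {x : E × E | x.1 ∈ D ∧ x.1 ≠ x.2} := by
    intro D hD
    rw [← h1, Measure.map_apply measurable_fst hD,
      ← measure_inter_add_diff (Prod.fst ⁻¹' D) hd]
    congr 1
  have hsetM : ∀ D : Set E, {x : E × E | x.2 ∈ D ∧ x.1 = x.2}
      = {x : E × E | x.1 ∈ D ∧ x.1 = x.2} := by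
    intro D
    ext x
    simp only [Set.mem_setOf_eq]
    constructor
    · rintro ⟨h, e⟩; exact ⟨by rw [e]; exact h, e⟩
    · rintro ⟨h, e⟩; exact ⟨by rw [← e]; exact h, e⟩
  have hsplitM : ∀ D : Set E, MeasurableSet D →
      μm D = m {x : E × E | x.1 ∈ D ∧ x.1 = x.2} + m {x : E × E | x.2 ∈ D ∧ x.1 ≠ x.2} := by
    intro D hD
    rw [← h2, Measure.map_apply measurable_snd hD,
      ← measure_inter_add_diff (Prod.snd ⁻¹' D) hd, ← hsetM D]
    congr 1
  -- γ ≤ μp ⊓ μm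
  have hle : γ ≤ μp ⊓ μm := by
    refine le_inf ?_ ?_ <;> rw [Measure.le_iff] <;> intro s hs <;> rw [hγ s hs]
    · rw [hsplitP s hs]; exact le_self_add
    · rw [hsplitM s hs]; exact le_self_add
  -- vanishing terms
  have hvP : ∀ D : Set E, MeasurableSet D → D ∩ Sp = ∅ →
      m {x : E × E | x.1 ∈ D ∧ x.1 ≠ x.2} = 0 := by
    intro D hD h0
    rw [hsuppP D hD]
    apply measure_mono_null _ (measure_empty (μ := m))
    intro x hx
    rw [h0] at hx
    exact hx.1
  have hvM : ∀ D : Set E, MeasurableSet D → D ∩ Sm = ∅ →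
      m {x : E × E | x.2 ∈ D ∧ x.1 ≠ x.2} = 0 := by
    intro D hD h0
    rw [hsuppM D hD]
    apply measure_mono_null _ (measure_empty (μ := m))
    intro x hx
    rw [h0] at hx
    exact hx.1
  -- main pointwise equality
  have key : ∀ D : Set E, MeasurableSet D →
      (μp ⊓ μm) D = m {x : E × E | x.1 ∈ D ∧ x.1 = x.2} := by
    intro D hD
    refine le_antisymm ?_ ?_
    · have h1' : (μp ⊓ μm) (D ∩ Sp) ≤ μm (D ∩ Sp) :=
        Measure.le_iff'.mp inf_le_right _
      have h2' : (μp ⊓ μm) (D \ Sp) ≤ μp (D \ Sp) :=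
        Measure.le_iff'.mp inf_le_left _
      have e1 : μm (D ∩ Sp) = γ (D ∩ Sp) := by
        rw [hsplitM _ (hD.inter hSp), hvM _ (hD.inter hSp)
          (by rw [Set.inter_assoc]; rw [Set.disjoint_iff_inter_eq_empty] at hdisj
              rw [hdisj, Set.inter_empty]),
          add_zero, hγ _ (hD.inter hSp)]
      have e2 : μp (D \ Sp) = γ (D \ Sp) := by
        rw [hsplitP _ (hD.diff hSp), hvP _ (hD.diff hSp)
          (Set.diff_inter_self),
          add_zero, hγ _ (hD.diff hSp)]
      calc (μp ⊓ μm) D ≤ (μp ⊓ μm) (D ∩ Sp) + (μp ⊓ μm) (D \ Sp) :=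
            measure_le_inter_add_diff _ D Sp
        _ ≤ γ (D ∩ Sp) + γ (D \ Sp) := by
            rw [← e1, ← e2]; exact add_le_add h1' h2'
        _ = γ D := measure_inter_add_diff D hSp
        _ = m {x : E × E | x.1 ∈ D ∧ x.1 = x.2} := hγ D hD
    · rw [← hγ D hD]
      exact Measure.le_iff.mp hle D hD
  refine ⟨?_, key⟩
  rw [key Set.univ MeasurableSet.univ]
  congr 1
  ext x
  simp
end

section
/- Let X⁺ and X⁻ be real Brownian motions started at 0 with constant drifts +θ and −θ respectively, θ > 0. Then the maximal probability (over all couplings of the path laws up to time t) that the two processes agree on [0, t] equals the total mass of the meet at time t, which is 2Φ(−θ√t); hence under a MEXIT coupling, P[MEXIT ≥ t] = 2Φ(−θ√t) and E[MEXIT] = ∫₀^∞ 2Φ(−θ√t) dt = θ^{−2}. -/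
open MeasureTheory ProbabilityTheory

open Real Set ENNReal

namespace Mexit15

lemma toNNReal_ne {t : ℝ} (ht : 0 < t) : t.toNNReal ≠ 0 := by
  simp [Real.toNNReal_eq_zero, not_le, ht]

lemma stdNormalCDF_nonneg (y : ℝ) : 0 ≤ stdNormalCDF y := ENNReal.toReal_nonneg

lemma gauss_Iic01 (y : ℝ) :
    (gaussianReal 0 1) (Set.Iic y) = ENNReal.ofReal (stdNormalCDF y) :=
  (ENNReal.ofReal_toReal (measure_ne_top _ _)).symm

lemma gauss_point (μ : ℝ) {v : NNReal} (hv : v ≠ 0) (y : ℝ) :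
    gaussianReal μ v {y} = 0 :=
  gaussianReal_absolutelyContinuous μ hv (measure_singleton y)

lemma gauss_Iio01 (y : ℝ) :
    (gaussianReal 0 1) (Set.Iio y) = ENNReal.ofReal (stdNormalCDF y) := by
  have h : (gaussianReal 0 1) (Set.Iic y) = (gaussianReal 0 1) (Set.Iio y) + (gaussianReal 0 1) {y} := by
    rw [← measure_union (by simp) (measurableSet_singleton y), Set.Iio_union_right]
  rw [gauss_point 0 one_ne_zero y, add_zero] at h
  rw [← h, gauss_Iic01]

lemma map_affine (μ t : ℝ) (ht : 0 < t) :
    (gaussianReal 0 1).map (fun x => Real.sqrt t * x + μ) = gaussianReal μ t.toNNReal := by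
  have h1 : (gaussianReal (0:ℝ) (1:NNReal)).map (Real.sqrt t * ·) = gaussianReal 0 t.toNNReal := by
    rw [gaussianReal_map_const_mul]
    congr 1
    · ring
    · ext
      simp [Real.sq_sqrt ht.le, Real.coe_toNNReal _ ht.le]
  have h2 := Measure.map_map (measurable_add_const μ) (measurable_const_mul (Real.sqrt t))
    (μ := gaussianReal (0:ℝ) (1:NNReal))
  have h3 : ((· + μ) ∘ (Real.sqrt t * ·)) = fun x => Real.sqrt t * x + μ := rfl
  rw [h3] at h2
  rw [← h2, h1, gaussianReal_map_add_const, zero_add]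

lemma gauss_Iio (μ t b : ℝ) (ht : 0 < t) :
    gaussianReal μ t.toNNReal (Set.Iio b)
      = ENNReal.ofReal (stdNormalCDF ((b - μ) / Real.sqrt t)) := by
  have hst : 0 < Real.sqrt t := Real.sqrt_pos.mpr ht
  rw [← map_affine μ t ht, Measure.map_apply (by fun_prop) measurableSet_Iio]
  have hpre : (fun x => Real.sqrt t * x + μ) ⁻¹' (Set.Iio b) = Set.Iio ((b - μ) / Real.sqrt t) := by
    ext x
    simp only [Set.mem_preimage, Set.mem_Iio, lt_div_iff₀ hst]
    constructor <;> intro h <;> nlinarith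
  rw [hpre, gauss_Iio01]

lemma gauss_Ioi (μ t b : ℝ) (ht : 0 < t) :
    gaussianReal μ t.toNNReal (Set.Ioi b)
      = ENNReal.ofReal (stdNormalCDF ((μ - b) / Real.sqrt t)) := by
  have hmap : (gaussianReal μ t.toNNReal).map ((-1 : ℝ) * ·) = gaussianReal (-μ) t.toNNReal := by
    rw [gaussianReal_map_const_mul]
    congr 1
    · ring
    · ext; norm_num
  have hpre : ((-1 : ℝ) * ·) ⁻¹' (Set.Iio (-b)) = Set.Ioi b := by
    ext x; simp only [Set.mem_preimage, Set.mem_Iio, Set.mem_Ioi]; constructor <;> intro h <;> linarith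
  have := Measure.map_apply (μ := gaussianReal μ t.toNNReal)
    (measurable_const_mul (-1 : ℝ)) (measurableSet_Iio (a := -b))
  rw [hmap, hpre] at this
  rw [← this, gauss_Iio (-μ) t (-b) ht]
  congr 2
  ring

lemma gauss_Ici (μ t b : ℝ) (ht : 0 < t) :
    gaussianReal μ t.toNNReal (Set.Ici b)
      = ENNReal.ofReal (stdNormalCDF ((μ - b) / Real.sqrt t)) := by
  have h : gaussianReal μ t.toNNReal (Set.Ici b)
      = gaussianReal μ t.toNNReal (Set.Ioi b) + gaussianReal μ t.toNNReal {b} := by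
    rw [← measure_union (by simp) (measurableSet_singleton b), Set.Ioi_union_left]
  rw [h, gauss_point μ (toNNReal_ne ht) b, add_zero, gauss_Ioi μ t b ht]


lemma tilt (a t : ℝ) (ht : 0 < t) {s : Set ℝ} (hs : MeasurableSet s) :
    ∫⁻ x in s, ENNReal.ofReal (Real.exp (a * x - a ^ 2 * t / 2)) ∂(gaussianReal 0 t.toNNReal)
      = gaussianReal (a * t) t.toNNReal s := by
  have hv := toNNReal_ne ht
  have hc : ((t.toNNReal : NNReal) : ℝ) = t := Real.coe_toNNReal _ ht.le
  rw [gaussianReal_of_var_ne_zero 0 hv, gaussianReal_of_var_ne_zero (a * t) hv,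
    withDensity_apply _ hs, restrict_withDensity hs,
    lintegral_withDensity_eq_lintegral_mul _ (measurable_gaussianPDF _ _)
      (by fun_prop)]
  refine setLIntegral_congr_fun hs (fun x _ => ?_)
  simp only [Pi.mul_apply, gaussianPDF, ← ENNReal.ofReal_mul (gaussianPDFReal_nonneg _ _ _)]
  congr 1
  simp only [gaussianPDFReal, hc]
  rw [mul_assoc, ← Real.exp_add]
  congr 2
  field_simp
  ring

lemma key (W : Measure (ℝ → ℝ)) (t : ℝ) (ht : 0 < t)
    (hWt : W.map (fun ω => ω t) = gaussianReal 0 t.toNNReal)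
    (a : ℝ) {s : Set ℝ} (hs : MeasurableSet s) :
    (W.withDensity fun ω => ENNReal.ofReal (Real.exp (a * ω t - a ^ 2 * t / 2)))
        ((fun ω : ℝ → ℝ => ω t) ⁻¹' s)
      = gaussianReal (a * t) t.toNNReal s := by
  rw [withDensity_apply _ (hs.preimage (measurable_pi_apply t))]
  have hmap := setLIntegral_map (μ := W) hs
    (f := fun x : ℝ => ENNReal.ofReal (Real.exp (a * x - a ^ 2 * t / 2)))
    (by fun_prop) (measurable_pi_apply t)
  rw [hWt] at hmap
  rw [← hmap, tilt a t ht hs]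

lemma gauss01_eq : gaussianReal (0:ℝ) ((1:ℝ)).toNNReal = gaussianReal 0 1 := by
  norm_num

lemma stdNormalCDF_zero : stdNormalCDF 0 = 1 / 2 := by
  have hcompl : (gaussianReal 0 1) (Set.Iic (0:ℝ)) + (gaussianReal 0 1) (Set.Ioi (0:ℝ)) = 1 := by
    rw [← measure_union (by simp [Set.Iic_disjoint_Ioi le_rfl]) measurableSet_Ioi,
      Set.Iic_union_Ioi, measure_univ]
  have hIoi : (gaussianReal 0 1) (Set.Ioi (0:ℝ)) = (gaussianReal 0 1) (Set.Iic (0:ℝ)) := by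
    rw [← gauss01_eq, gauss_Ioi 0 1 0 one_pos]
    simp [stdNormalCDF, gauss01_eq, ENNReal.ofReal_toReal (measure_ne_top _ _)]
  rw [hIoi, ← two_mul] at hcompl
  have := congrArg ENNReal.toReal hcompl
  rw [ENNReal.toReal_mul] at this
  simp only [ENNReal.toReal_ofNat, ENNReal.toReal_one] at this
  unfold stdNormalCDF
  linarith

lemma stdNormalCDF_lt_half {y : ℝ} (hy : y < 0) : stdNormalCDF y < 1 / 2 := by
  have hne : gaussianReal 0 1 (Set.Ioc y 0) ≠ 0 := by
    rw [gaussianReal_apply 0 one_ne_zero]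
    intro h
    rw [lintegral_eq_zero_iff (measurable_gaussianPDF _ _), Filter.EventuallyEq,
      ae_restrict_iff' measurableSet_Ioc] at h
    have h2 : ∀ᵐ x ∂(volume : Measure ℝ), x ∉ Set.Ioc y 0 :=
      h.mono fun x hx hmem => absurd (hx hmem) (gaussianPDF_pos 0 one_ne_zero x).ne'
    rw [ae_iff] at h2
    simp only [not_not, Set.setOf_mem_eq] at h2
    rw [Real.volume_Ioc] at h2
    simp only [ENNReal.ofReal_eq_zero] at h2
    linarith
  have hunion : (gaussianReal 0 1) (Set.Iic y) + (gaussianReal 0 1) (Set.Ioc y 0)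
      = (gaussianReal 0 1) (Set.Iic (0:ℝ)) := by
    rw [← measure_union (Set.Iic_disjoint_Ioc le_rfl) measurableSet_Ioc,
      Set.Iic_union_Ioc_eq_Iic hy.le]
  have := congrArg ENNReal.toReal hunion
  rw [ENNReal.toReal_add (measure_ne_top _ _) (measure_ne_top _ _)] at this
  have hpos : 0 < ((gaussianReal 0 1) (Set.Ioc y 0)).toReal :=
    ENNReal.toReal_pos hne (measure_ne_top _ _)
  have h0 : ((gaussianReal 0 1) (Set.Iic (0:ℝ))).toReal = 1/2 := stdNormalCDF_zero
  unfold stdNormalCDF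
  linarith

lemma hpdf_eq (x : ℝ) :
    gaussianPDFReal 0 1 x = (Real.sqrt (2 * π))⁻¹ * Real.exp (-(1/2) * x ^ 2) := by
  simp only [gaussianPDFReal, NNReal.coe_one, mul_one, sub_zero]
  ring_nf

lemma hbase : Integrable (fun x : ℝ => x ^ 2 * Real.exp (-(1/2) * x ^ 2)) := by
  have h := integrable_rpow_mul_exp_neg_mul_sq (b := (1/2:ℝ)) (by norm_num) (s := (2:ℝ)) (by norm_num)
  refine h.congr (Filter.Eventually.of_forall fun x => ?_)
  norm_num [show (2:ℝ) = ((2:ℕ):ℝ) by norm_num, Real.rpow_natCast]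

lemma hIoi_val : ∫ x in Set.Ioi (0:ℝ), x ^ 2 * Real.exp (-(1/2) * x ^ 2)
    = Real.sqrt 2 * Real.sqrt π / 2 := by
  have h := integral_rpow_mul_exp_neg_mul_rpow (p := (2:ℝ)) (q := (2:ℝ)) (b := (1/2:ℝ))
    two_pos (by norm_num) (by norm_num)
  have hL : ∫ x in Set.Ioi (0:ℝ), x ^ (2:ℝ) * Real.exp (-(1/2) * x ^ (2:ℝ))
      = ∫ x in Set.Ioi (0:ℝ), x ^ 2 * Real.exp (-(1/2) * x ^ 2) := by
    refine setIntegral_congr_fun measurableSet_Ioi fun x _ => ?_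
    norm_num [show (2:ℝ) = ((2:ℕ):ℝ) by norm_num, Real.rpow_natCast]
  rw [hL] at h
  rw [h]
  have hG : Real.Gamma ((2 + 1) / 2) = Real.sqrt π / 2 := by
    rw [show ((2:ℝ) + 1) / 2 = 1/2 + 1 by norm_num, Real.Gamma_add_one (by norm_num),
      Real.Gamma_one_half_eq]
    ring
  have hpow : ((1:ℝ)/2) ^ (-((2:ℝ) + 1) / 2) = 2 * Real.sqrt 2 := by
    rw [show ((1:ℝ)/2) = 2⁻¹ by norm_num, show (-((2:ℝ) + 1) / 2) = -(3/2) by norm_num,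
      Real.inv_rpow (by norm_num), ← Real.rpow_neg (by norm_num), neg_neg,
      show (3:ℝ)/2 = 1 + 1/2 by norm_num, Real.rpow_add two_pos, Real.rpow_one,
      ← Real.sqrt_eq_rpow]
  rw [hG, hpow]
  ring

lemma hsq_exp : ∫ x : ℝ, x ^ 2 * Real.exp (-(1/2) * x ^ 2) = Real.sqrt 2 * Real.sqrt π := by
  have hsplit := integral_add_compl (measurableSet_Iic (a := (0:ℝ))) hbase
  rw [Set.compl_Iic] at hsplit
  have hIic : ∫ x in Set.Iic (0:ℝ), x ^ 2 * Real.exp (-(1/2) * x ^ 2)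
      = ∫ x in Set.Ioi (0:ℝ), x ^ 2 * Real.exp (-(1/2) * x ^ 2) := by
    rw [← neg_zero, ← integral_comp_neg_Iic, neg_zero]
    refine setIntegral_congr_fun measurableSet_Iic fun x _ => ?_
    ring_nf
  rw [← hsplit, hIic, hIoi_val]
  ring

lemma hsq_gauss : ∫ x : ℝ, x ^ 2 ∂(gaussianReal 0 1) = 1 := by
  rw [gaussianReal_of_var_ne_zero 0 one_ne_zero]
  have hd : volume.withDensity (gaussianPDF 0 1)
      = volume.withDensity (fun x => ((gaussianPDFReal 0 1 x).toNNReal : ℝ≥0∞)) := rfl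
  rw [hd, integral_withDensity_eq_integral_smul (measurable_gaussianPDFReal 0 1).real_toNNReal]
  have hcongr : ∀ x : ℝ, (gaussianPDFReal 0 1 x).toNNReal • (x ^ 2)
      = (Real.sqrt (2 * π))⁻¹ * (x ^ 2 * Real.exp (-(1/2) * x ^ 2)) := by
    intro x
    rw [NNReal.smul_def, Real.coe_toNNReal _ (gaussianPDFReal_nonneg 0 1 x), smul_eq_mul,
      hpdf_eq x]
    ring
  rw [show (fun x : ℝ => (gaussianPDFReal 0 1 x).toNNReal • (x ^ 2))
      = fun x : ℝ => (Real.sqrt (2 * π))⁻¹ * (x ^ 2 * Real.exp (-(1/2) * x ^ 2)) from funext hcongr]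
  rw [integral_const_mul, hsq_exp, Real.sqrt_mul (by norm_num) π]
  rw [inv_mul_cancel₀]
  positivity


lemma hInt2 (θ : ℝ) (hθ : 0 < θ) :
    Integrable (fun x : ℝ => x ^ 2 / θ ^ 2) (gaussianReal 0 1) := by
  refine Integrable.div_const ?_ _
  rw [gaussianReal_of_var_ne_zero 0 one_ne_zero]
  rw [integrable_withDensity_iff (measurable_gaussianPDF 0 1)
    (Filter.Eventually.of_forall fun x => ENNReal.ofReal_lt_top)]
  refine (hbase.const_mul ((Real.sqrt (2 * π))⁻¹)).congr
    (Filter.Eventually.of_forall fun x => ?_)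
  show (Real.sqrt (2 * π))⁻¹ * (x ^ 2 * Real.exp (-(1/2) * x ^ 2))
      = x ^ 2 * (gaussianPDF 0 1 x).toReal
  rw [show gaussianPDF 0 1 x = ENNReal.ofReal (gaussianPDFReal 0 1 x) from rfl,
    ENNReal.toReal_ofReal (gaussianPDFReal_nonneg 0 1 x), hpdf_eq x]
  ring

lemma hset (θ : ℝ) (hθ : 0 < θ) {u : ℝ} (hu : 0 < u) :
    ((gaussianReal 0 1) {x : ℝ | u < x ^ 2 / θ ^ 2}).toReal
      = 2 * stdNormalCDF (-θ * Real.sqrt u) := by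
  have ha : 0 < θ * Real.sqrt u := by positivity
  have hsetEq : {x : ℝ | u < x ^ 2 / θ ^ 2}
      = Set.Iio (-(θ * Real.sqrt u)) ∪ Set.Ioi (θ * Real.sqrt u) := by
    ext x
    simp only [Set.mem_setOf_eq, Set.mem_union, Set.mem_Iio, Set.mem_Ioi]
    rw [lt_div_iff₀ (by positivity)]
    have hsq : Real.sqrt u ^ 2 = u := Real.sq_sqrt hu.le
    constructor
    · intro h
      have h2 : (θ * Real.sqrt u) ^ 2 < |x| ^ 2 := by
        rw [sq_abs, mul_pow, hsq]; nlinarith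
      have h3 : θ * Real.sqrt u < |x| :=
        lt_of_pow_lt_pow_left₀ 2 (abs_nonneg x) h2
      rcases lt_abs.mp h3 with h4 | h4
      · right; exact h4
      · left; linarith
    · rintro (h | h) <;> nlinarith
  rw [hsetEq, measure_union ?hdisj measurableSet_Ioi]
  case hdisj =>
    rw [Set.disjoint_left]
    intro x hx hx2
    simp only [Set.mem_Iio, Set.mem_Ioi] at hx hx2
    linarith
  rw [← gauss01_eq, gauss_Iio 0 1 _ one_pos, gauss_Ioi 0 1 _ one_pos,
    ENNReal.toReal_add ENNReal.ofReal_ne_top ENNReal.ofReal_ne_top,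
    ENNReal.toReal_ofReal (stdNormalCDF_nonneg _), ENNReal.toReal_ofReal (stdNormalCDF_nonneg _)]
  rw [Real.sqrt_one]
  ring_nf

lemma part3 (θ : ℝ) (hθ : 0 < θ) :
    ∫ u in Set.Ioi (0:ℝ), 2 * stdNormalCDF (-θ * Real.sqrt u) = 1 / θ ^ 2 := by
  have hlayer := (hInt2 θ hθ).integral_eq_integral_meas_lt
    (Filter.Eventually.of_forall fun x => by positivity)
  have h1 : ∫ u in Set.Ioi (0:ℝ), 2 * stdNormalCDF (-θ * Real.sqrt u)
      = ∫ u in Set.Ioi (0:ℝ), ((gaussianReal 0 1) {x : ℝ | u < x ^ 2 / θ ^ 2}).toReal :=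
    setIntegral_congr_fun measurableSet_Ioi fun u hu => (hset θ hθ hu).symm
  simp only [measureReal_def] at hlayer
  rw [h1, ← hlayer, integral_div, hsq_gauss]

end Mexit15

open Mexit15

/-- Brownian MEXIT: let `W` be a measure on path space whose time-`t` marginal is
`N(0, t)`, and let the time-`t` path laws of Brownian motions with drifts `±θ` be given
by the Girsanov densities `exp(±θ ω(t) − θ²t/2)` with respect to `W`. Then every coupling
of these two laws agrees on `[0, t]` with probability at most `2Φ(−θ√t)`, this bound is
attained (a MEXIT coupling), and the expected MEXIT time `∫₀^∞ 2Φ(−θ√t) dt` equals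
`θ⁻²`. -/
theorem stmt15 (θ : ℝ) (hθ : 0 < θ)
    (W : Measure (ℝ → ℝ)) [IsProbabilityMeasure W]
    (hW : ∀ t : ℝ, 0 < t → W.map (fun ω => ω t) = gaussianReal 0 t.toNNReal)
    (t : ℝ) (ht : 0 < t) :
    (∀ m : Measure ((ℝ → ℝ) × (ℝ → ℝ)),
        m.map Prod.fst
            = W.withDensity (fun ω => ENNReal.ofReal (Real.exp (θ * ω t - θ ^ 2 * t / 2))) →
        m.map Prod.snd
            = W.withDensity (fun ω => ENNReal.ofReal (Real.exp (-θ * ω t - θ ^ 2 * t / 2))) →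
        m {x : (ℝ → ℝ) × (ℝ → ℝ) | ∀ s : ℝ, 0 ≤ s → s ≤ t → x.1 s = x.2 s}
          ≤ ENNReal.ofReal (2 * stdNormalCDF (-θ * Real.sqrt t)))
    ∧ (∃ m : Measure ((ℝ → ℝ) × (ℝ → ℝ)),
        m.map Prod.fst
            = W.withDensity (fun ω => ENNReal.ofReal (Real.exp (θ * ω t - θ ^ 2 * t / 2)))
        ∧ m.map Prod.snd
            = W.withDensity (fun ω => ENNReal.ofReal (Real.exp (-θ * ω t - θ ^ 2 * t / 2)))
        ∧ m {x : (ℝ → ℝ) × (ℝ → ℝ) | ∀ s : ℝ, 0 ≤ s → s ≤ t → x.1 s = x.2 s}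
            = ENNReal.ofReal (2 * stdNormalCDF (-θ * Real.sqrt t)))
    ∧ (∫ u in Set.Ioi (0 : ℝ), 2 * stdNormalCDF (-θ * Real.sqrt u) = 1 / θ ^ 2) := by
  have hWt := hW t ht
  have hst : (0:ℝ) < Real.sqrt t := Real.sqrt_pos.mpr ht
  set Φ := stdNormalCDF (-θ * Real.sqrt t) with hΦ
  have hΦnn : 0 ≤ Φ := stdNormalCDF_nonneg _
  set Dp : (ℝ → ℝ) → ENNReal :=
    fun ω => ENNReal.ofReal (Real.exp (θ * ω t - θ ^ 2 * t / 2)) with hDp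
  set Dm : (ℝ → ℝ) → ENNReal :=
    fun ω => ENNReal.ofReal (Real.exp (-θ * ω t - θ ^ 2 * t / 2)) with hDm
  have hDmEq : Dm = fun ω => ENNReal.ofReal (Real.exp ((-θ) * ω t - (-θ) ^ 2 * t / 2)) := by
    funext ω; rw [hDm]; norm_num
  have harg1 : (0 - θ * t) / Real.sqrt t = -θ * Real.sqrt t := by
    rw [zero_sub, neg_div, mul_div_assoc, Real.div_sqrt, neg_mul]
  have harg2 : (-θ * t - 0) / Real.sqrt t = -θ * Real.sqrt t := by
    rw [sub_zero, neg_mul, neg_div, mul_div_assoc, Real.div_sqrt, neg_mul]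
  -- measure of the two half-space events
  have hDpIio : (W.withDensity Dp) ((fun ω : ℝ → ℝ => ω t) ⁻¹' Set.Iio 0)
      = ENNReal.ofReal Φ := by
    rw [hDp, key W t ht hWt θ measurableSet_Iio, gauss_Iio _ t _ ht, harg1]
  have hDmIci : (W.withDensity Dm) ((fun ω : ℝ → ℝ => ω t) ⁻¹' Set.Ici 0)
      = ENNReal.ofReal Φ := by
    rw [hDmEq, key W t ht hWt (-θ) measurableSet_Ici, gauss_Ici _ t _ ht, harg2]
  have hDpuniv : (W.withDensity Dp) Set.univ = 1 := by
    have := key W t ht hWt θ (s := Set.univ) MeasurableSet.univ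
    rw [Set.preimage_univ] at this
    rw [hDp, this, measure_univ]
  have hDmuniv : (W.withDensity Dm) Set.univ = 1 := by
    have := key W t ht hWt (-θ) (s := Set.univ) MeasurableSet.univ
    rw [Set.preimage_univ] at this
    rw [hDmEq, this, measure_univ]
  -- Part 1
  have hpart1 : ∀ m : Measure ((ℝ → ℝ) × (ℝ → ℝ)),
      m.map Prod.fst = W.withDensity Dp →
      m.map Prod.snd = W.withDensity Dm →
      m {x : (ℝ → ℝ) × (ℝ → ℝ) | ∀ s : ℝ, 0 ≤ s → s ≤ t → x.1 s = x.2 s}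
        ≤ ENNReal.ofReal (2 * Φ) := by
    intro m h1 h2
    set A : Set (ℝ → ℝ) := (fun ω : ℝ → ℝ => ω t) ⁻¹' Set.Iio 0 with hA
    set B : Set (ℝ → ℝ) := (fun ω : ℝ → ℝ => ω t) ⁻¹' Set.Ici 0 with hB
    have hAm : MeasurableSet A := measurableSet_Iio.preimage (measurable_pi_apply t)
    have hBm : MeasurableSet B := measurableSet_Ici.preimage (measurable_pi_apply t)
    have hsub : {x : (ℝ → ℝ) × (ℝ → ℝ) | ∀ s : ℝ, 0 ≤ s → s ≤ t → x.1 s = x.2 s}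
        ⊆ Prod.fst ⁻¹' A ∪ Prod.snd ⁻¹' B := by
      rintro ⟨x1, x2⟩ hx
      have hxt : x1 t = x2 t := hx t ht.le le_rfl
      by_cases hlt : x1 t < 0
      · exact Or.inl hlt
      · refine Or.inr ?_
        have : (0:ℝ) ≤ x2 t := by rw [← hxt]; exact not_lt.mp hlt
        exact this
    calc m {x : (ℝ → ℝ) × (ℝ → ℝ) | ∀ s : ℝ, 0 ≤ s → s ≤ t → x.1 s = x.2 s}
        ≤ m (Prod.fst ⁻¹' A ∪ Prod.snd ⁻¹' B) := measure_mono hsub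
      _ ≤ m (Prod.fst ⁻¹' A) + m (Prod.snd ⁻¹' B) := measure_union_le _ _
      _ = (m.map Prod.fst) A + (m.map Prod.snd) B := by
          rw [Measure.map_apply measurable_fst hAm, Measure.map_apply measurable_snd hBm]
      _ = ENNReal.ofReal Φ + ENNReal.ofReal Φ := by rw [h1, h2, hDpIio, hDmIci]
      _ = ENNReal.ofReal (2 * Φ) := by rw [← ENNReal.ofReal_add hΦnn hΦnn]; ring_nf
  refine ⟨hpart1, ?_, part3 θ hθ⟩
  -- Part 2 : construction of the optimal coupling
  classical
  set c : ℝ := θ ^ 2 * t / 2 with hc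
  set M : (ℝ → ℝ) → ENNReal := fun ω =>
    ENNReal.ofReal (min (Real.exp (θ * ω t - c)) (Real.exp (-θ * ω t - c))) with hM
  have hMmeas : Measurable M := by
    apply Measurable.ennreal_ofReal
    fun_prop
  set Gp : (ℝ → ℝ) → ENNReal := fun ω =>
    ENNReal.ofReal (Real.exp (θ * ω t - c)
      - min (Real.exp (θ * ω t - c)) (Real.exp (-θ * ω t - c))) with hGp
  set Gm : (ℝ → ℝ) → ENNReal := fun ω =>
    ENNReal.ofReal (Real.exp (-θ * ω t - c)
      - min (Real.exp (θ * ω t - c)) (Real.exp (-θ * ω t - c))) with hGm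
  have hsplitP : Dp = M + Gp := by
    funext ω
    rw [hDp, hM, hGp]
    simp only [Pi.add_apply]
    rw [← ENNReal.ofReal_add (le_min (Real.exp_nonneg _) (Real.exp_nonneg _))
      (sub_nonneg.mpr (min_le_left _ _))]
    congr 1
    ring
  have hsplitM : Dm = M + Gm := by
    funext ω
    rw [hDm, hM, hGm]
    simp only [Pi.add_apply]
    rw [← ENNReal.ofReal_add (le_min (Real.exp_nonneg _) (Real.exp_nonneg _))
      (sub_nonneg.mpr (min_le_right _ _))]
    congr 1
    ring
  have hwdP : W.withDensity Dp = W.withDensity M + W.withDensity Gp := by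
    rw [hsplitP, withDensity_add_left hMmeas]
  have hwdM : W.withDensity Dm = W.withDensity M + W.withDensity Gm := by
    rw [hsplitM, withDensity_add_left hMmeas]
  -- mass of the meet
  set E : Set (ℝ → ℝ) := (fun ω : ℝ → ℝ => ω t) ⁻¹' Set.Iio 0 with hE
  have hEm : MeasurableSet E := measurableSet_Iio.preimage (measurable_pi_apply t)
  have hEc : Eᶜ = (fun ω : ℝ → ℝ => ω t) ⁻¹' Set.Ici 0 := by
    rw [hE, ← Set.preimage_compl, Set.compl_Iio]
  have hνuniv : (W.withDensity M) Set.univ = ENNReal.ofReal (2 * Φ) := by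
    rw [withDensity_apply _ MeasurableSet.univ, Measure.restrict_univ,
      ← lintegral_add_compl M hEm]
    have h1 : ∫⁻ ω in E, M ω ∂W = ∫⁻ ω in E, Dp ω ∂W := by
      refine setLIntegral_congr_fun hEm (fun ω hω => ?_)
      rw [hM, hDp, hc]
      beta_reduce
      congr 1
      refine min_eq_left (Real.exp_le_exp.mpr ?_)
      have : ω t < 0 := hω
      nlinarith
    have h2 : ∫⁻ ω in Eᶜ, M ω ∂W = ∫⁻ ω in Eᶜ, Dm ω ∂W := by
      refine setLIntegral_congr_fun hEm.compl (fun ω hω => ?_)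
      rw [hM, hDm, hc]
      beta_reduce
      congr 1
      refine min_eq_right (Real.exp_le_exp.mpr ?_)
      have : (0:ℝ) ≤ ω t := by
        have := hω
        rw [hEc] at this
        exact this
      nlinarith
    rw [h1, h2, ← withDensity_apply _ hEm, ← withDensity_apply _ hEm.compl, hDpIio, hEc,
      hDmIci, ← ENNReal.ofReal_add hΦnn hΦnn]
    ring_nf
  set q : ℝ := 1 - 2 * Φ with hqdef
  have hq : 0 < q := by
    have hlt := stdNormalCDF_lt_half (y := -θ * Real.sqrt t) (by nlinarith)
    rw [hqdef, hΦ]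
    linarith
  have hofq : ENNReal.ofReal q = 1 - ENNReal.ofReal (2 * Φ) := by
    rw [hqdef, ENNReal.ofReal_sub _ (by positivity), ENNReal.ofReal_one]
  have hGpuniv : (W.withDensity Gp) Set.univ = ENNReal.ofReal q := by
    have hadd : (W.withDensity Dp) Set.univ
        = (W.withDensity M) Set.univ + (W.withDensity Gp) Set.univ := by
      rw [hwdP, Measure.add_apply]
    rw [hDpuniv, hνuniv] at hadd
    have h' : (W.withDensity Gp) Set.univ + ENNReal.ofReal (2 * Φ) = 1 := by
      rw [add_comm, ← hadd]
    rw [hofq]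
    exact ENNReal.eq_sub_of_add_eq ENNReal.ofReal_ne_top h'
  have hGmuniv : (W.withDensity Gm) Set.univ = ENNReal.ofReal q := by
    have hadd : (W.withDensity Dm) Set.univ
        = (W.withDensity M) Set.univ + (W.withDensity Gm) Set.univ := by
      rw [hwdM, Measure.add_apply]
    rw [hDmuniv, hνuniv] at hadd
    have h' : (W.withDensity Gm) Set.univ + ENNReal.ofReal (2 * Φ) = 1 := by
      rw [add_comm, ← hadd]
    rw [hofq]
    exact ENNReal.eq_sub_of_add_eq ENNReal.ofReal_ne_top h'
  haveI : IsFiniteMeasure (W.withDensity Gp) :=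
    ⟨by rw [hGpuniv]; exact ENNReal.ofReal_lt_top⟩
  haveI : IsFiniteMeasure (W.withDensity Gm) :=
    ⟨by rw [hGmuniv]; exact ENNReal.ofReal_lt_top⟩
  set diag : (ℝ → ℝ) → (ℝ → ℝ) × (ℝ → ℝ) := fun ω => (ω, ω) with hdiag
  have hdiagMeas : Measurable diag := measurable_id.prodMk measurable_id
  set m : Measure ((ℝ → ℝ) × (ℝ → ℝ)) := (W.withDensity M).map diag
      + (ENNReal.ofReal q)⁻¹ • ((W.withDensity Gp).prod (W.withDensity Gm)) with hm
  have hqne : ENNReal.ofReal q ≠ 0 := (ENNReal.ofReal_pos.mpr hq).ne'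
  have hfst : m.map Prod.fst = W.withDensity Dp := by
    rw [hm, Measure.map_add _ _ measurable_fst, Measure.map_smul,
      Measure.map_fst_prod, hGmuniv, Measure.map_map measurable_fst hdiagMeas]
    have hcomp : (Prod.fst ∘ diag) = id := rfl
    rw [hcomp, Measure.map_id, smul_smul,
      ENNReal.inv_mul_cancel hqne ENNReal.ofReal_ne_top, one_smul, hwdP]
  have hsnd : m.map Prod.snd = W.withDensity Dm := by
    rw [hm, Measure.map_add _ _ measurable_snd, Measure.map_smul,
      Measure.map_snd_prod, hGpuniv, Measure.map_map measurable_snd hdiagMeas]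
    have hcomp : (Prod.snd ∘ diag) = id := rfl
    rw [hcomp, Measure.map_id, smul_smul,
      ENNReal.inv_mul_cancel hqne ENNReal.ofReal_ne_top, one_smul, hwdM]
  have hpre : diag ⁻¹' {x : (ℝ → ℝ) × (ℝ → ℝ) | ∀ s : ℝ, 0 ≤ s → s ≤ t → x.1 s = x.2 s}
      = Set.univ := by
    ext ω
    simp [hdiag]
  have hlower : ENNReal.ofReal (2 * Φ)
      ≤ m {x : (ℝ → ℝ) × (ℝ → ℝ) | ∀ s : ℝ, 0 ≤ s → s ≤ t → x.1 s = x.2 s} := by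
    calc ENNReal.ofReal (2 * Φ) = (W.withDensity M) Set.univ := hνuniv.symm
      _ = (W.withDensity M)
          (diag ⁻¹' {x : (ℝ → ℝ) × (ℝ → ℝ) | ∀ s : ℝ, 0 ≤ s → s ≤ t → x.1 s = x.2 s}) := by
          rw [hpre]
      _ ≤ ((W.withDensity M).map diag)
          {x : (ℝ → ℝ) × (ℝ → ℝ) | ∀ s : ℝ, 0 ≤ s → s ≤ t → x.1 s = x.2 s} :=
          Measure.le_map_apply hdiagMeas.aemeasurable _
      _ ≤ m {x : (ℝ → ℝ) × (ℝ → ℝ) | ∀ s : ℝ, 0 ≤ s → s ≤ t → x.1 s = x.2 s} := by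
          rw [hm, Measure.add_apply]
          exact self_le_add_right _ _
  exact ⟨m, hfst, hsnd, le_antisymm (hpart1 m hfst hsnd) hlower⟩
end

section
/- Let W be standard Brownian motion and θ > 0. Then ∫₀^∞ E[min(e^{θW_t − θ²t/2}, e^{−θW_t − θ²t/2})] dt = 1/θ². Equivalently, 2∫₀^∞ ∫₀^∞ (2πt)^{−1/2} exp(−(w + θt)²/(2t)) dw dt = θ^{−2}. -/
open MeasureTheory ProbabilityTheory

section Stmt17Aux

open Real Set
open scoped NNReal ENNReal

lemma integral_Ioi_comp_add_right (g : ℝ → ℝ) (a c : ℝ) :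
    ∫ x in Ioi a, g (x + c) = ∫ x in Ioi (a + c), g x := by
  have h := (measurePreserving_add_right (volume : Measure ℝ) c).setIntegral_preimage_emb
    (MeasurableEquiv.addRight c).measurableEmbedding g (Ioi (a + c))
  rw [← h]
  congr 1
  ext x
  simp [Set.mem_preimage]

lemma integral_gaussianReal_eq (m : ℝ) {v : ℝ≥0} (hv : v ≠ 0) (g : ℝ → ℝ) :
    ∫ x, g x ∂(gaussianReal m v) = ∫ x, gaussianPDFReal m v x * g x := by
  rw [gaussianReal_of_var_ne_zero _ hv]
  have h : gaussianPDF m v = fun x => ((gaussianPDFReal m v x).toNNReal : ℝ≥0∞) := rfl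
  rw [h, integral_withDensity_eq_integral_smul ((measurable_gaussianPDFReal m v).real_toNNReal) g]
  congr 1
  ext x
  rw [NNReal.smul_def, smul_eq_mul, Real.coe_toNNReal _ (gaussianPDFReal_nonneg m v x)]

lemma min_exp (θ x c : ℝ) (hθ : 0 < θ) :
    min (Real.exp (θ * x - c)) (Real.exp (-θ * x - c)) = Real.exp (-θ * |x| - c) := by
  rcases le_total 0 x with hx | hx
  · rw [abs_of_nonneg hx, min_eq_right (exp_le_exp.2 (by nlinarith))]
  · rw [abs_of_nonpos hx, min_eq_left (exp_le_exp.2 (by nlinarith))]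
    ring_nf

lemma pdf_mul_exp (θ t x : ℝ) (hθ : 0 < θ) (ht : 0 < t) :
    gaussianPDFReal 0 t.toNNReal x * min (Real.exp (θ * x - θ ^ 2 * t / 2))
      (Real.exp (-θ * x - θ ^ 2 * t / 2))
    = (Real.sqrt (2 * π * t))⁻¹ * Real.exp (-(|x| + θ * t) ^ 2 / (2 * t)) := by
  rw [min_exp θ x _ hθ, gaussianPDFReal]
  rw [Real.coe_toNNReal t ht.le]
  rw [mul_assoc, ← Real.exp_add]
  rw [sub_zero]
  congr 1
  have h2 : -x ^ 2 / (2 * t) + (-θ * |x| - θ ^ 2 * t / 2) = -(|x| + θ * t) ^ 2 / (2 * t) := by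
    field_simp
    nlinarith [sq_abs x]
  rw [h2]

lemma inner_integral (θ t : ℝ) (hθ : 0 < θ) (ht : 0 < t) :
    ∫ x, min (Real.exp (θ * x - θ ^ 2 * t / 2)) (Real.exp (-θ * x - θ ^ 2 * t / 2))
        ∂(gaussianReal 0 t.toNNReal)
    = 2 * ∫ w in Ioi (0 : ℝ),
        (Real.sqrt (2 * π * t))⁻¹ * Real.exp (-(w + θ * t) ^ 2 / (2 * t)) := by
  have hv : t.toNNReal ≠ 0 := by
    simp only [ne_eq, Real.toNNReal_eq_zero, not_le]
    exact ht
  rw [integral_gaussianReal_eq 0 hv]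
  have h1 : (fun x => gaussianPDFReal 0 t.toNNReal x * min (Real.exp (θ * x - θ ^ 2 * t / 2))
      (Real.exp (-θ * x - θ ^ 2 * t / 2)))
      = fun x => (fun w => (Real.sqrt (2 * π * t))⁻¹ *
          Real.exp (-(w + θ * t) ^ 2 / (2 * t))) |x| := by
    funext x
    exact pdf_mul_exp θ t x hθ ht
  rw [h1]
  exact integral_comp_abs (f := fun w => (Real.sqrt (2 * π * t))⁻¹ * Real.exp (-(w + θ * t) ^ 2 / (2 * t)))

lemma tail_integral (θ t : ℝ) (hθ : 0 < θ) (ht : 0 < t) :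
    ∫ w in Ioi (0 : ℝ), (Real.sqrt (2 * π * t))⁻¹ * Real.exp (-(w + θ * t) ^ 2 / (2 * t))
    = ∫ u in Ioi (θ * Real.sqrt t), gaussianPDFReal 0 1 u := by
  have hst : (0 : ℝ) < Real.sqrt t := Real.sqrt_pos.2 ht
  set g : ℝ → ℝ := fun u => (Real.sqrt (2 * π * t))⁻¹ * Real.exp (-u ^ 2 / (2 * t)) with hg
  have h1 : ∫ w in Ioi (0 : ℝ), (Real.sqrt (2 * π * t))⁻¹ * Real.exp (-(w + θ * t) ^ 2 / (2 * t))
      = ∫ u in Ioi (θ * t), g u := by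
    have := integral_Ioi_comp_add_right g 0 (θ * t)
    rwa [zero_add] at this
  rw [h1]
  have h2 : ∫ x in Ioi (θ * Real.sqrt t), g (Real.sqrt t * x)
      = (Real.sqrt t)⁻¹ • ∫ u in Ioi (θ * t), g u := by
    have := integral_comp_mul_left_Ioi g (θ * Real.sqrt t) hst
    rwa [show Real.sqrt t * (θ * Real.sqrt t) = θ * t by
      rw [mul_comm θ (Real.sqrt t), ← mul_assoc, Real.mul_self_sqrt ht.le, mul_comm]] at this
  have h3 : ∫ u in Ioi (θ * t), g u
      = Real.sqrt t * ∫ x in Ioi (θ * Real.sqrt t), g (Real.sqrt t * x) := by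
    rw [h2, smul_eq_mul, ← mul_assoc, mul_inv_cancel₀ hst.ne', one_mul]
  rw [h3]
  have h4 : (fun x => g (Real.sqrt t * x)) = fun x => (Real.sqrt t)⁻¹ * gaussianPDFReal 0 1 x := by
    funext x
    rw [hg]
    simp only [gaussianPDFReal, NNReal.coe_one, mul_one, sub_zero]
    rw [mul_pow, Real.sq_sqrt ht.le]
    rw [Real.sqrt_mul (by positivity : (0:ℝ) ≤ 2 * π) t, mul_inv]
    have : -(t * x ^ 2) / (2 * t) = -x ^ 2 / 2 := by
      field_simp
    rw [this]
    ring
  rw [h4, integral_const_mul, ← mul_assoc, mul_inv_cancel₀ hst.ne', one_mul]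

lemma gamma_calc : ∫ a in Ioi (0:ℝ), a ^ 2 * Real.exp (-(1/2) * a ^ 2)
    = Real.sqrt (2 * π) / 2 := by
  have h := integral_rpow_mul_exp_neg_mul_rpow (p := 2) (q := 2) (b := 1/2)
    (by norm_num) (by norm_num) (by norm_num)
  have h2 : ∀ x : ℝ, x ^ (2:ℝ) = x ^ (2:ℕ) := fun x => by
    rw [show ((2:ℝ)) = ((2:ℕ):ℝ) by norm_num, Real.rpow_natCast]
  simp only [h2] at h
  rw [h]
  have hG : Real.Gamma (((2:ℝ) + 1) / 2) = Real.sqrt π / 2 := by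
    rw [show ((2:ℝ) + 1)/2 = 1/2 + 1 by norm_num, Real.Gamma_add_one (by norm_num),
      Real.Gamma_one_half_eq]
    ring
  rw [hG]
  have hp : ((1:ℝ)/2) ^ (-((2:ℝ) + 1) / 2) = 2 * Real.sqrt 2 := by
    rw [show ((1:ℝ)/2) = 2⁻¹ by norm_num, ← Real.rpow_neg_one (2:ℝ),
      ← Real.rpow_mul (by norm_num : (0:ℝ) ≤ 2),
      show (-1 : ℝ) * (-((2:ℝ) + 1) / 2) = 1 + 1/2 by norm_num,
      Real.rpow_add (by norm_num : (0:ℝ) < 2), Real.rpow_one,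
      ← Real.sqrt_eq_rpow]
  rw [hp, Real.sqrt_mul (by norm_num : (0:ℝ) ≤ 2) π]
  ring

lemma pdf_one (a : ℝ) :
    gaussianPDFReal 0 1 a = (Real.sqrt (2 * π))⁻¹ * Real.exp (-(1/2) * a ^ 2) := by
  simp only [gaussianPDFReal, NNReal.coe_one, mul_one, sub_zero]
  congr 1
  ring

lemma t_integral (θ : ℝ) (hθ : 0 < θ) :
    ∫ t in Ioi (0:ℝ), (∫ u in Ioi (θ * Real.sqrt t), gaussianPDFReal 0 1 u)
      = 1 / (2 * θ ^ 2) := by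
  set φ : ℝ → ℝ := gaussianPDFReal 0 1 with hφ
  set f : ℝ → ℝ := fun a => (max a 0) ^ 2 / θ ^ 2 with hfdef
  have hf_meas : Measurable f := ((measurable_id.max measurable_const).pow_const 2).div_const _
  have hf_nn : ∀ a, 0 ≤ f a := fun a => by positivity
  have hset : ∀ t ∈ Ioi (0:ℝ), {a : ℝ | t < f a} = Ioi (θ * Real.sqrt t) := by
    intro t ht
    have ht' : (0:ℝ) < t := ht
    have hts : 0 < θ * Real.sqrt t := by positivity
    ext a
    simp only [hfdef, mem_setOf_eq, mem_Ioi]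
    rw [lt_div_iff₀ (by positivity : (0:ℝ) < θ ^ 2),
      show t * θ ^ 2 = (θ * Real.sqrt t) ^ 2 by
        rw [mul_pow, Real.sq_sqrt ht'.le]; ring]
    constructor
    · intro h
      by_contra hc
      push_neg at hc
      rcases le_total a 0 with ha | ha
      · rw [max_eq_right ha] at h
        nlinarith
      · rw [max_eq_left ha] at h
        have := pow_le_pow_left₀ ha hc 2
        linarith
    · intro h
      rw [max_eq_left (le_of_lt (lt_trans hts h))]
      exact pow_lt_pow_left₀ h hts.le two_ne_zero
  set G : ℝ → ℝ := fun t => ∫ u in Ioi (θ * Real.sqrt t), φ u with hGdef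
  have hφ_nn : ∀ x, 0 ≤ φ x := gaussianPDFReal_nonneg 0 1
  have hG_nn : ∀ t, 0 ≤ G t := fun t =>
    setIntegral_nonneg measurableSet_Ioi fun x _ => hφ_nn x
  have hG_anti : Antitone G := by
    intro t1 t2 h12
    refine setIntegral_mono_set ((integrable_gaussianPDFReal 0 1).integrableOn)
      (ae_of_all _ fun x => hφ_nn x) (HasSubset.Subset.eventuallyLE ?_)
    exact Ioi_subset_Ioi (mul_le_mul_of_nonneg_left (Real.sqrt_le_sqrt h12) hθ.le)
  have hG_ofReal : ∀ t : ℝ, ENNReal.ofReal (G t)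
      = gaussianReal 0 1 (Ioi (θ * Real.sqrt t)) := fun t =>
    (gaussianReal_apply_eq_integral 0 one_ne_zero _).symm
  -- integrability of pdf * f
  have hx2 : Integrable (fun a : ℝ => a ^ 2 * Real.exp (-(1/2) * a ^ 2)) := by
    have h := integrable_rpow_mul_exp_neg_mul_sq (b := 1/2) (by norm_num) (s := 2) (by norm_num)
    have h2 : ∀ x : ℝ, x ^ (2:ℝ) = x ^ (2:ℕ) := fun x => by
      rw [show ((2:ℝ)) = ((2:ℕ):ℝ) by norm_num, Real.rpow_natCast]
    simpa only [h2] using h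
  have hInt : Integrable (fun a : ℝ => φ a * f a) := by
    refine Integrable.mono'
      (((hx2.const_mul (Real.sqrt (2*π))⁻¹).const_mul (θ^2)⁻¹))
      ((measurable_gaussianPDFReal 0 1).mul hf_meas).aestronglyMeasurable
      (ae_of_all _ fun a => ?_)
    rw [Real.norm_eq_abs, abs_of_nonneg (mul_nonneg (hφ_nn a) (hf_nn a))]
    have hfa : f a = (max a 0) ^ 2 / θ ^ 2 := rfl
    have h1 : (max a 0) ^ 2 ≤ a ^ 2 := by
      rcases le_total a 0 with ha | ha
      · rw [max_eq_right ha]; simpa using sq_nonneg a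
      · rw [max_eq_left ha]
    have h2 : (0:ℝ) < Real.exp (-(1/2) * a ^ 2) := Real.exp_pos _
    have h3 : (0:ℝ) ≤ (Real.sqrt (2 * π))⁻¹ := by positivity
    have h4 : (0:ℝ) ≤ (θ^2)⁻¹ := by positivity
    calc φ a * f a
        = ((Real.sqrt (2*π))⁻¹ * Real.exp (-(1/2) * a ^ 2) * (max a 0) ^ 2) * (θ^2)⁻¹ := by
          rw [hφ]
          simp only [pdf_one, hfa]
          ring
      _ ≤ ((Real.sqrt (2*π))⁻¹ * Real.exp (-(1/2) * a ^ 2) * a ^ 2) * (θ^2)⁻¹ := by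
          refine mul_le_mul_of_nonneg_right ?_ h4
          exact mul_le_mul_of_nonneg_left h1 (mul_nonneg h3 h2.le)
      _ = (θ^2)⁻¹ * ((Real.sqrt (2*π))⁻¹ * (a ^ 2 * Real.exp (-(1/2) * a ^ 2))) := by ring
  -- layer cake
  have key : ∫ t in Ioi (0:ℝ), G t = ∫ a, φ a * f a := by
    rw [integral_eq_lintegral_of_nonneg_ae (ae_of_all _ hG_nn)
        hG_anti.measurable.aestronglyMeasurable]
    have e1 : ∫⁻ t in Ioi (0:ℝ), ENNReal.ofReal (G t)
        = ∫⁻ t in Ioi (0:ℝ), gaussianReal 0 1 {a : ℝ | t < f a} := by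
      refine setLIntegral_congr_fun measurableSet_Ioi (fun t ht => ?_)
      rw [hG_ofReal, hset t ht]
    have e2 : ∫⁻ t in Ioi (0:ℝ), gaussianReal 0 1 {a : ℝ | t < f a}
        = ∫⁻ a, ENNReal.ofReal (f a) ∂(gaussianReal 0 1) :=
      (lintegral_eq_lintegral_meas_lt (gaussianReal 0 1) (ae_of_all _ hf_nn)
        hf_meas.aemeasurable).symm
    have e3 : ∫⁻ a, ENNReal.ofReal (f a) ∂(gaussianReal 0 1)
        = ∫⁻ a, ENNReal.ofReal (φ a * f a) := by
      rw [gaussianReal_of_var_ne_zero 0 one_ne_zero,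
        lintegral_withDensity_eq_lintegral_mul volume (measurable_gaussianPDF 0 1)
          hf_meas.ennreal_ofReal]
      refine lintegral_congr fun a => ?_
      simp only [Pi.mul_apply, gaussianPDF]
      rw [← ENNReal.ofReal_mul (hφ_nn a)]
    have e4 : ∫⁻ a, ENNReal.ofReal (φ a * f a)
        = ENNReal.ofReal (∫ a, φ a * f a) :=
      (ofReal_integral_eq_lintegral_ofReal hInt
        (ae_of_all _ fun a => mul_nonneg (hφ_nn a) (hf_nn a))).symm
    rw [e1, e2, e3, e4, ENNReal.toReal_ofReal
      (integral_nonneg fun a => mul_nonneg (hφ_nn a) (hf_nn a))]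
  rw [key]
  -- compute the integral
  have e5 : (fun a => φ a * f a)
      = Set.indicator (Ioi (0:ℝ)) (fun a => (θ^2)⁻¹ * ((Real.sqrt (2*π))⁻¹
          * (a ^ 2 * Real.exp (-(1/2) * a ^ 2)))) := by
    funext a
    have hfa : f a = (max a 0) ^ 2 / θ ^ 2 := rfl
    by_cases ha : a ∈ Ioi (0:ℝ)
    · rw [Set.indicator_of_mem ha, hfa, hφ, pdf_one]
      have ha' : (0:ℝ) ≤ a := (le_of_lt ha)
      rw [max_eq_left ha']
      field_simp
    · rw [Set.indicator_of_notMem ha, hfa]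
      have ha' : a ≤ 0 := by simpa using ha
      simp [max_eq_right ha']
  rw [e5, integral_indicator measurableSet_Ioi, integral_const_mul, integral_const_mul,
    gamma_calc]
  have hs : (0:ℝ) < Real.sqrt (2*π) := Real.sqrt_pos.2 (by positivity)
  field_simp

end Stmt17Aux

/-- The expected agreement time before MEXIT of Brownian motions with drifts `±θ`:
`∫₀^∞ E[min(e^{θW_t − θ²t/2}, e^{−θW_t − θ²t/2})] dt = 1/θ²` (the expectation being under
the `N(0, t)` law of `W_t`), equivalently
`2∫₀^∞ ∫₀^∞ (2πt)^{−1/2} exp(−(w + θt)²/(2t)) dw dt = θ⁻²`. -/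
theorem stmt17 (θ : ℝ) (hθ : 0 < θ) :
    (∫ t in Set.Ioi (0 : ℝ),
        ∫ x, min (Real.exp (θ * x - θ ^ 2 * t / 2)) (Real.exp (-θ * x - θ ^ 2 * t / 2))
          ∂(gaussianReal 0 t.toNNReal)) = 1 / θ ^ 2
    ∧ 2 * (∫ t in Set.Ioi (0 : ℝ), ∫ w in Set.Ioi (0 : ℝ),
        (Real.sqrt (2 * Real.pi * t))⁻¹ * Real.exp (-(w + θ * t) ^ 2 / (2 * t)))
      = 1 / θ ^ 2 := by
  have hJ : (∫ t in Set.Ioi (0 : ℝ), ∫ w in Set.Ioi (0 : ℝ),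
      (Real.sqrt (2 * Real.pi * t))⁻¹ * Real.exp (-(w + θ * t) ^ 2 / (2 * t)))
      = 1 / (2 * θ ^ 2) := by
    rw [MeasureTheory.setIntegral_congr_fun measurableSet_Ioi
      (fun t ht => tail_integral θ t hθ ht)]
    exact t_integral θ hθ
  constructor
  · rw [MeasureTheory.setIntegral_congr_fun measurableSet_Ioi
      (fun t ht => inner_integral θ t hθ ht), MeasureTheory.integral_const_mul, hJ]
    field_simp
  · rw [hJ]
    field_simp
end
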